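/- arXiv:2102.07273 — 7 statements merged into one kernel-verified Lean document; each statement's English description precedes it below -/
import Mathlib

section
/- (van der Corput lemma) Let G be a countable abelian group, let H be a Hilbert space, let (Φ_N) be a Følner sequence for G, and let (x_g)_{g∈G} be a family in H with sup_{g∈G} ‖x_g‖ < ∞. Suppose that for every h ∈ G the limit γ_h := lim_{N→∞} E_{g∈Φ_N} ⟨x_{g+h}, x_g⟩ exists, and that M ≥ 0 is a real number such that for every Følner sequence (Ψ_H) of G one has limsup_{H→∞} |E_{h∈Ψ_H} γ_h| ≤ M. Then limsup_{N→∞} ‖E_{g∈Φ_N} x_g‖² ≤ M. -/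
open MeasureTheory Filter

/-- A Følner sequence in a countable abelian group: a sequence of nonempty finite
sets that is asymptotically invariant under every translation. -/
def IsFolner {G : Type*} [AddCommGroup G] [DecidableEq G] (Φ : ℕ → Finset G) : Prop :=
  (∀ N, (Φ N).Nonempty) ∧
    ∀ g : G, Tendsto
      (fun N => ((((Φ N).image (g + ·)) \ Φ N ∪ Φ N \ ((Φ N).image (g + ·))).card : ℝ)
        / (Φ N).card) atTop (nhds 0)

section Aux

variable {G : Type*} [AddCommGroup G] [DecidableEq G]
variable {E : Type*} [NormedAddCommGroup E] [NormedSpace ℝ E]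

lemma vdc_sum_diff_norm_le (S T : Finset G) (f : G → E) (D : ℝ)
    (hf : ∀ u, ‖f u‖ ≤ D) :
    ‖(∑ u ∈ S, f u) - ∑ u ∈ T, f u‖ ≤ D * ((S \ T ∪ T \ S).card : ℝ) := by
  rw [← Finset.sum_sdiff_sub_sum_sdiff]
  calc ‖(∑ u ∈ S \ T, f u) - ∑ u ∈ T \ S, f u‖
      ≤ ‖∑ u ∈ S \ T, f u‖ + ‖∑ u ∈ T \ S, f u‖ := norm_sub_le _ _
    _ ≤ (∑ u ∈ S \ T, ‖f u‖) + ∑ u ∈ T \ S, ‖f u‖ :=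
        add_le_add (norm_sum_le _ _) (norm_sum_le _ _)
    _ ≤ (∑ _u ∈ S \ T, D) + ∑ _u ∈ T \ S, D :=
        add_le_add (Finset.sum_le_sum fun u _ => hf u) (Finset.sum_le_sum fun u _ => hf u)
    _ = D * (((S \ T).card : ℝ) + ((T \ S).card : ℝ)) := by
        simp [Finset.sum_const, nsmul_eq_mul]; ring
    _ = D * ((S \ T ∪ T \ S).card : ℝ) := by
        rw [Finset.card_union_of_disjoint disjoint_sdiff_sdiff]
        push_cast; ring

lemma vdc_avg_norm_le (S : Finset G) (f : G → E) (D : ℝ) (hD : 0 ≤ D)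
    (hf : ∀ u, ‖f u‖ ≤ D) :
    ‖(S.card : ℝ)⁻¹ • ∑ u ∈ S, f u‖ ≤ D := by
  have h1 : ‖(S.card : ℝ)⁻¹ • ∑ u ∈ S, f u‖ = (S.card : ℝ)⁻¹ * ‖∑ u ∈ S, f u‖ := by
    rw [norm_smul, norm_inv, Real.norm_natCast]
  rw [h1]
  rcases Nat.eq_zero_or_pos S.card with h | h
  · simp [h, hD]
  · have hc : (0 : ℝ) < S.card := by exact_mod_cast h
    have h2 : ‖∑ u ∈ S, f u‖ ≤ (S.card : ℝ) * D := by
      calc ‖∑ u ∈ S, f u‖ ≤ ∑ u ∈ S, ‖f u‖ := norm_sum_le _ _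
        _ ≤ ∑ _u ∈ S, D := Finset.sum_le_sum fun u _ => hf u
        _ = (S.card : ℝ) * D := by simp [Finset.sum_const, nsmul_eq_mul]
    calc (S.card : ℝ)⁻¹ * ‖∑ u ∈ S, f u‖ ≤ (S.card : ℝ)⁻¹ * ((S.card : ℝ) * D) :=
          mul_le_mul_of_nonneg_left h2 (by positivity)
      _ = D := by field_simp

lemma vdc_shift_avg (S : Finset G) (f : G → E) (D : ℝ)
    (hf : ∀ u, ‖f u‖ ≤ D) (h : G) :
    ‖((S.card : ℝ)⁻¹ • ∑ g ∈ S, f g) - (S.card : ℝ)⁻¹ • ∑ g ∈ S, f (h + g)‖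
      ≤ D * (((S.image (h + ·) \ S ∪ S \ S.image (h + ·)).card : ℝ) / S.card) := by
  have himg : ∑ u ∈ S.image (h + ·), f u = ∑ g ∈ S, f (h + g) :=
    Finset.sum_image (fun a _ b _ hab => by simpa using hab)
  rw [← himg, ← smul_sub, norm_smul, norm_inv, Real.norm_natCast]
  have hkey := vdc_sum_diff_norm_le S (S.image (h + ·)) f D hf
  have hcard : ((S \ S.image (h + ·) ∪ S.image (h + ·) \ S).card : ℝ)
      = ((S.image (h + ·) \ S ∪ S \ S.image (h + ·)).card : ℝ) := by
    rw [Finset.union_comm]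
  calc (S.card : ℝ)⁻¹ * ‖(∑ g ∈ S, f g) - ∑ u ∈ S.image (h + ·), f u‖
      ≤ (S.card : ℝ)⁻¹ * (D * ((S.image (h + ·) \ S ∪ S \ S.image (h + ·)).card : ℝ)) := by
        apply mul_le_mul_of_nonneg_left _ (by positivity)
        rw [← hcard]; exact hkey
    _ = D * (((S.image (h + ·) \ S ∪ S \ S.image (h + ·)).card : ℝ) / S.card) := by
        rw [div_eq_mul_inv]; ring

lemma vdc_avg_sq (S : Finset G) (f : G → E) :
    ‖(S.card : ℝ)⁻¹ • ∑ g ∈ S, f g‖ ^ 2 ≤ (S.card : ℝ)⁻¹ * ∑ g ∈ S, ‖f g‖ ^ 2 := by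
  rcases Nat.eq_zero_or_pos S.card with h | h
  · have : S = ∅ := Finset.card_eq_zero.mp h
    simp [this]
  · have hc : (0 : ℝ) < S.card := by exact_mod_cast h
    have h1 : ‖∑ g ∈ S, f g‖ ≤ ∑ g ∈ S, ‖f g‖ := norm_sum_le _ _
    have h2 : (∑ g ∈ S, ‖f g‖) ^ 2 ≤ (S.card : ℝ) * ∑ g ∈ S, ‖f g‖ ^ 2 := by
      exact_mod_cast sq_sum_le_card_mul_sum_sq (s := S) (f := fun g => ‖f g‖)
    have h3 : ‖(S.card : ℝ)⁻¹ • ∑ g ∈ S, f g‖ = (S.card : ℝ)⁻¹ * ‖∑ g ∈ S, f g‖ := by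
      rw [norm_smul, norm_inv, Real.norm_natCast]
    have h4 : ‖∑ g ∈ S, f g‖ ^ 2 ≤ (S.card : ℝ) * ∑ g ∈ S, ‖f g‖ ^ 2 :=
      le_trans (pow_le_pow_left₀ (norm_nonneg _) h1 2) h2
    rw [h3, mul_pow]
    calc ((S.card : ℝ)⁻¹) ^ 2 * ‖∑ g ∈ S, f g‖ ^ 2
        ≤ ((S.card : ℝ)⁻¹) ^ 2 * ((S.card : ℝ) * ∑ g ∈ S, ‖f g‖ ^ 2) :=
          mul_le_mul_of_nonneg_left h4 (by positivity)
      _ = (S.card : ℝ)⁻¹ * ∑ g ∈ S, ‖f g‖ ^ 2 := by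
          field_simp

lemma vdc_folner_translate (Φ : ℕ → Finset G) (hΦ : IsFolner Φ) (t : ℕ → G) :
    IsFolner (fun K => (Φ K).image (fun h => h - t K)) := by
  have hinj : ∀ K, Function.Injective (fun h : G => h - t K) := by
    intro K a b hab
    simpa using congrArg (· + t K) hab
  refine ⟨fun K => (hΦ.1 K).image _, fun g => ?_⟩
  have key : ∀ K,
      ((((((Φ K).image (fun h => h - t K)).image (g + ·)) \ ((Φ K).image (fun h => h - t K)) ∪
        ((Φ K).image (fun h => h - t K)) \ (((Φ K).image (fun h => h - t K)).image (g + ·))).card : ℝ))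
        / (((Φ K).image (fun h => h - t K)).card : ℝ)
      = ((((Φ K).image (g + ·)) \ Φ K ∪ Φ K \ ((Φ K).image (g + ·))).card : ℝ) / (Φ K).card := by
    intro K
    have himg : ((Φ K).image (fun h => h - t K)).image (g + ·)
        = ((Φ K).image (g + ·)).image (fun h => h - t K) := by
      rw [Finset.image_image, Finset.image_image]
      refine Finset.image_congr fun h _ => ?_
      show g + (h - t K) = g + h - t K
      abel
    rw [himg, ← Finset.image_sdiff _ _ (hinj K), ← Finset.image_sdiff _ _ (hinj K),
      ← Finset.image_union, Finset.card_image_of_injective _ (hinj K),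
      Finset.card_image_of_injective _ (hinj K)]
  exact Tendsto.congr (fun K => (key K).symm) (hΦ.2 g)

end Aux

set_option maxHeartbeats 1000000 in
/-- The van der Corput lemma for Følner sequences in a countable abelian group. -/
theorem van_der_corput
    {G : Type*} [AddCommGroup G] [Countable G] [DecidableEq G]
    {H : Type*} [NormedAddCommGroup H] [InnerProductSpace ℂ H] [CompleteSpace H]
    (Φ : ℕ → Finset G) (hΦ : IsFolner Φ)
    (x : G → H) (C : ℝ) (hx : ∀ g, ‖x g‖ ≤ C)
    (γ : G → ℂ)
    (hγ : ∀ h : G, Tendsto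
      (fun N => ((Φ N).card : ℝ)⁻¹ • ∑ g ∈ Φ N, (inner ℂ (x (g + h)) (x g) : ℂ))
      atTop (nhds (γ h)))
    (M : ℝ) (hM : 0 ≤ M)
    (hbound : ∀ Ψ : ℕ → Finset G, IsFolner Ψ →
      limsup (fun K => ‖((Ψ K).card : ℝ)⁻¹ • ∑ h ∈ Ψ K, γ h‖) atTop ≤ M) :
    limsup (fun N => ‖((Φ N).card : ℝ)⁻¹ • ∑ g ∈ Φ N, x g‖ ^ 2) atTop ≤ M := by
  classical
  have hC : 0 ≤ C := le_trans (norm_nonneg (x 0)) (hx 0)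
  set δ : G → ℕ → ℝ := fun h N =>
    ((((Φ N).image (h + ·)) \ Φ N ∪ Φ N \ ((Φ N).image (h + ·))).card : ℝ) / (Φ N).card
    with hδdef
  have hδ : ∀ h, Tendsto (δ h) atTop (nhds 0) := fun h => hΦ.2 h
  have hδ0 : ∀ h N, 0 ≤ δ h N := fun h N => by positivity
  -- bound on γ
  have hinnb : ∀ a b : G, ‖(inner ℂ (x a) (x b) : ℂ)‖ ≤ C ^ 2 := by
    intro a b
    calc ‖(inner ℂ (x a) (x b) : ℂ)‖ ≤ ‖x a‖ * ‖x b‖ := norm_inner_le_norm _ _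
      _ ≤ C * C := mul_le_mul (hx _) (hx _) (norm_nonneg _) hC
      _ = C ^ 2 := (sq C).symm
  have hγb : ∀ d, ‖γ d‖ ≤ C ^ 2 := by
    intro d
    exact le_of_tendsto (hγ d).norm (Eventually.of_forall fun N =>
      vdc_avg_norm_le _ _ _ (by positivity) (fun u => hinnb _ _))
  -- convergence of pair correlation averages
  have hc : ∀ h h' : G, Tendsto
      (fun N => ((Φ N).card : ℝ)⁻¹ • ∑ g ∈ Φ N, (inner ℂ (x (g + h)) (x (g + h')) : ℂ))
      atTop (nhds (γ (h - h'))) := by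
    intro h h'
    set f : G → ℂ := fun u => (inner ℂ (x (u + (h - h'))) (x u) : ℂ) with hfdef
    have hfb : ∀ u, ‖f u‖ ≤ C ^ 2 := fun u => hinnb _ _
    have heq : ∀ N, ∑ g ∈ Φ N, (inner ℂ (x (g + h)) (x (g + h')) : ℂ)
        = ∑ g ∈ Φ N, f (h' + g) := by
      intro N
      refine Finset.sum_congr rfl fun g _ => ?_
      rw [hfdef]
      simp only [show h' + g = g + h' from add_comm h' g,
        show g + h' + (h - h') = g + h from by abel]
    have hdiff : ∀ N, ‖(((Φ N).card : ℝ)⁻¹ • ∑ g ∈ Φ N, f g)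
        - ((Φ N).card : ℝ)⁻¹ • ∑ g ∈ Φ N, (inner ℂ (x (g + h)) (x (g + h')) : ℂ)‖
        ≤ C ^ 2 * δ h' N := by
      intro N
      rw [heq N]
      exact vdc_shift_avg (Φ N) f (C ^ 2) hfb h'
    have h0 : Tendsto (fun N =>
        (((Φ N).card : ℝ)⁻¹ • ∑ g ∈ Φ N, (inner ℂ (x (g + h)) (x (g + h')) : ℂ))
        - ((Φ N).card : ℝ)⁻¹ • ∑ g ∈ Φ N, f g) atTop (nhds 0) := by
      have hb0 : Tendsto (fun N => C ^ 2 * δ h' N) atTop (nhds 0) := by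
        have hh := (hδ h').const_mul (C ^ 2)
        rw [mul_zero] at hh
        exact hh
      apply squeeze_zero_norm (fun N => ?_) hb0
      rw [norm_sub_rev]
      exact hdiff N
    have hbase : Tendsto (fun N => ((Φ N).card : ℝ)⁻¹ • ∑ g ∈ Φ N, f g)
        atTop (nhds (γ (h - h'))) := hγ (h - h')
    have hfin := hbase.add h0
    rw [add_zero] at hfin
    exact hfin.congr fun N => by ring
  -- choice of maximizing translates and the translated Følner sequence
  choose t ht_mem ht_max using fun K =>
    Finset.exists_max_image (Φ K) (fun τ => ‖∑ h ∈ Φ K, γ (h - τ)‖) (hΦ.1 K)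
  have hinj : ∀ K, Function.Injective (fun h : G => h - t K) := by
    intro K a b hab
    simpa using congrArg (· + t K) hab
  set Ψ : ℕ → Finset G := fun K => (Φ K).image (fun h => h - t K) with hΨdef
  have hΨ : IsFolner Ψ := vdc_folner_translate Φ hΦ t
  have hΨval : ∀ K, ‖((Ψ K).card : ℝ)⁻¹ • ∑ h ∈ Ψ K, γ h‖
      = ((Φ K).card : ℝ)⁻¹ * ‖∑ h ∈ Φ K, γ (h - t K)‖ := by
    intro K
    rw [hΨdef]
    simp only []
    rw [Finset.sum_image (fun a _ b _ hab => hinj K hab),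
      Finset.card_image_of_injective _ (hinj K), norm_smul, norm_inv, Real.norm_natCast]
  have hlimsupΨ := hbound Ψ hΨ
  -- the ε-argument
  apply le_of_forall_pos_le_add
  intro ε hε
  have hbddΨ : IsBoundedUnder (· ≤ ·) atTop
      (fun K => ‖((Ψ K).card : ℝ)⁻¹ • ∑ h ∈ Ψ K, γ h‖) :=
    isBoundedUnder_of ⟨C ^ 2, fun K =>
      vdc_avg_norm_le _ _ _ (by positivity) (fun u => hγb u)⟩
  obtain ⟨K, hK⟩ : ∃ K, ‖((Ψ K).card : ℝ)⁻¹ • ∑ h ∈ Ψ K, γ h‖ < M + ε :=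
    (eventually_lt_of_limsup_lt (lt_of_le_of_lt hlimsupΨ (by linarith)) hbddΨ).exists
  rw [hΨval K] at hK
  -- setup for the chosen K
  have hTne : (Φ K).Nonempty := hΦ.1 K
  have hm : (0 : ℝ) < (Φ K).card := by exact_mod_cast Finset.card_pos.mpr hTne
  set T : Finset G := Φ K with hT
  set r : ℝ := ((T.card : ℝ))⁻¹ with hr
  have hr0 : 0 ≤ r := by positivity
  set A : ℕ → H := fun N => ((Φ N).card : ℝ)⁻¹ • ∑ g ∈ Φ N, x g with hA
  set v : G → H := fun g => r • ∑ h ∈ T, x (g + h) with hv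
  set B : ℕ → H := fun N => ((Φ N).card : ℝ)⁻¹ • ∑ g ∈ Φ N, v g with hB
  set F : ℕ → ℝ := fun N => ((Φ N).card : ℝ)⁻¹ * ∑ g ∈ Φ N, ‖v g‖ ^ 2 with hF
  set u : ℕ → ℝ := fun N => r * ∑ h ∈ T, C * δ h N with hu
  have hvC : ∀ g, ‖v g‖ ≤ C := fun g =>
    vdc_avg_norm_le T (fun h => x (g + h)) C hC (fun h => hx _)
  have hBC : ∀ N, ‖B N‖ ≤ C := fun N => vdc_avg_norm_le (Φ N) v C hC hvC
  have hJensen : ∀ N, ‖B N‖ ^ 2 ≤ F N := fun N => vdc_avg_sq (Φ N) v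
  have hu0 : ∀ N, 0 ≤ u N := by
    intro N
    exact mul_nonneg hr0 (Finset.sum_nonneg fun h _ => mul_nonneg hC (hδ0 h N))
  have hu_lim : Tendsto u atTop (nhds 0) := by
    have h1 : Tendsto (fun N => ∑ h ∈ T, C * δ h N) atTop (nhds (∑ h ∈ T, C * 0)) :=
      tendsto_finset_sum T fun h _ => (hδ h).const_mul C
    have h2 := h1.const_mul r
    simp only [mul_zero, Finset.sum_const_zero] at h2
    exact h2
  -- A - B bound
  have hAB : ∀ N, ‖A N - B N‖ ≤ u N := by
    intro N
    have e1 : ∑ g ∈ Φ N, v g = r • ∑ h ∈ T, ∑ g ∈ Φ N, x (h + g) := by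
      rw [hv]
      simp only []
      rw [← Finset.smul_sum]
      congr 1
      rw [Finset.sum_comm]
      exact Finset.sum_congr rfl fun h _ => Finset.sum_congr rfl fun g _ => by rw [add_comm]
    have hBrep : B N = r • ∑ h ∈ T, ((Φ N).card : ℝ)⁻¹ • ∑ g ∈ Φ N, x (h + g) := by
      rw [hB]
      simp only []
      rw [e1, smul_comm ((Φ N).card : ℝ)⁻¹ r, Finset.smul_sum]
    have hArep : A N = r • ∑ _h ∈ T, A N := by
      rw [Finset.sum_const, ← Nat.cast_smul_eq_nsmul ℝ, smul_smul, hr,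
        inv_mul_cancel₀ hm.ne', one_smul]
    calc ‖A N - B N‖
        = ‖r • ∑ h ∈ T, (A N - ((Φ N).card : ℝ)⁻¹ • ∑ g ∈ Φ N, x (h + g))‖ := by
          nth_rewrite 1 [hArep]
          rw [hBrep, ← smul_sub, ← Finset.sum_sub_distrib]
      _ ≤ r * ∑ h ∈ T, ‖A N - ((Φ N).card : ℝ)⁻¹ • ∑ g ∈ Φ N, x (h + g)‖ := by
          rw [norm_smul, Real.norm_of_nonneg hr0]
          exact mul_le_mul_of_nonneg_left (norm_sum_le _ _) hr0
      _ ≤ r * ∑ h ∈ T, C * δ h N := by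
          apply mul_le_mul_of_nonneg_left _ hr0
          apply Finset.sum_le_sum
          intro h _
          have := vdc_shift_avg (Φ N) x C hx h
          rw [hA, hδdef]
          exact this
      _ = u N := by rw [hu]
  -- expansion of ‖v g‖²
  have hexp : ∀ g, ‖v g‖ ^ 2
      = r ^ 2 * ∑ h ∈ T, ∑ h' ∈ T, (inner ℂ (x (g + h)) (x (g + h')) : ℂ).re := by
    intro g
    have hs : v g = ((r : ℂ)) • ∑ h ∈ T, x (g + h) := by
      rw [hv]
      simp only []
      exact RCLike.real_smul_eq_coe_smul (K := ℂ) r _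
    have h1 : (inner ℂ (v g) (v g) : ℂ)
        = (r : ℂ) * ((r : ℂ) * ∑ h ∈ T, ∑ h' ∈ T, (inner ℂ (x (g + h)) (x (g + h')) : ℂ)) := by
      rw [hs, inner_smul_left, inner_smul_right, Complex.conj_ofReal]
      congr 2
      rw [sum_inner]
      exact Finset.sum_congr rfl fun h _ => inner_sum _ _ _
    calc ‖v g‖ ^ 2 = RCLike.re (inner ℂ (v g) (v g) : ℂ) := (inner_self_eq_norm_sq _).symm
      _ = (((r : ℂ) * ((r : ℂ) * ∑ h ∈ T, ∑ h' ∈ T, (inner ℂ (x (g + h)) (x (g + h')) : ℂ))) : ℂ).re := by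
          rw [h1, RCLike.re_to_complex]
      _ = r ^ 2 * ∑ h ∈ T, ∑ h' ∈ T, (inner ℂ (x (g + h)) (x (g + h')) : ℂ).re := by
          simp only [Complex.re_ofReal_mul, Complex.re_sum]
          ring
  -- F in terms of the pair averages and its limit
  set c : G → G → ℕ → ℂ := fun h h' N =>
    ((Φ N).card : ℝ)⁻¹ • ∑ g ∈ Φ N, (inner ℂ (x (g + h)) (x (g + h')) : ℂ) with hcdef
  have hFc : ∀ N, F N = r ^ 2 * ∑ h ∈ T, ∑ h' ∈ T, (c h h' N).re := by
    intro N
    have e1 : ∑ g ∈ Φ N, ‖v g‖ ^ 2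
        = r ^ 2 * ∑ h ∈ T, ∑ h' ∈ T, ∑ g ∈ Φ N, (inner ℂ (x (g + h)) (x (g + h')) : ℂ).re := by
      rw [Finset.sum_congr rfl fun g _ => hexp g, ← Finset.mul_sum]
      congr 1
      rw [Finset.sum_comm]
      exact Finset.sum_congr rfl fun h _ => Finset.sum_comm
    have e2 : ∀ h h', (c h h' N).re
        = ((Φ N).card : ℝ)⁻¹ * ∑ g ∈ Φ N, (inner ℂ (x (g + h)) (x (g + h')) : ℂ).re := by
      intro h h'
      rw [hcdef]
      simp only [Complex.smul_re, Complex.re_sum, smul_eq_mul]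
    rw [hF]
    simp only [e1, e2, ← Finset.mul_sum]
    ring
  have hL : Tendsto F atTop (nhds (r ^ 2 * ∑ h ∈ T, ∑ h' ∈ T, (γ (h - h')).re)) := by
    have hre : ∀ h h', Tendsto (fun N => (c h h' N).re) atTop (nhds ((γ (h - h')).re)) :=
      fun h h' => (Complex.continuous_re.tendsto _).comp (hc h h')
    have hsum := tendsto_finset_sum T fun h (_ : h ∈ T) =>
      tendsto_finset_sum T fun h' (_ : h' ∈ T) => hre h h'
    have := hsum.const_mul (r ^ 2)
    exact Tendsto.congr (fun N => (hFc N).symm) this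
  -- the limit is at most M + ε
  have hLle : r ^ 2 * ∑ h ∈ T, ∑ h' ∈ T, (γ (h - h')).re ≤ M + ε := by
    have hper : ∀ h' ∈ T, ∑ h ∈ T, (γ (h - h')).re ≤ ‖∑ h ∈ T, γ (h - t K)‖ := by
      intro h' hh'
      calc ∑ h ∈ T, (γ (h - h')).re = (∑ h ∈ T, γ (h - h')).re := (Complex.re_sum _ _).symm
        _ ≤ ‖∑ h ∈ T, γ (h - h')‖ := by
            exact Complex.re_le_norm _
        _ ≤ ‖∑ h ∈ T, γ (h - t K)‖ := by
            rw [hT] at hh' ⊢; exact ht_max K h' hh'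
    have hswap : ∑ h ∈ T, ∑ h' ∈ T, (γ (h - h')).re
        = ∑ h' ∈ T, ∑ h ∈ T, (γ (h - h')).re := Finset.sum_comm
    calc r ^ 2 * ∑ h ∈ T, ∑ h' ∈ T, (γ (h - h')).re
        ≤ r ^ 2 * ∑ _h' ∈ T, ‖∑ h ∈ T, γ (h - t K)‖ := by
          rw [hswap]
          exact mul_le_mul_of_nonneg_left (Finset.sum_le_sum hper) (by positivity)
      _ = r * ‖∑ h ∈ T, γ (h - t K)‖ := by
          rw [Finset.sum_const, nsmul_eq_mul, hr, sq, mul_assoc,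
            inv_mul_cancel_left₀ hm.ne']
      _ ≤ M + ε := le_of_lt hK
  -- final assembly
  have hpt : ∀ N, ‖A N‖ ^ 2 ≤ F N + (2 * C * u N + u N ^ 2) := by
    intro N
    have h1 : ‖A N‖ ≤ ‖B N‖ + u N := by
      calc ‖A N‖ = ‖B N + (A N - B N)‖ := by rw [add_sub_cancel]
        _ ≤ ‖B N‖ + ‖A N - B N‖ := norm_add_le _ _
        _ ≤ ‖B N‖ + u N := by linarith [hAB N]
    have h5 : ‖A N‖ ^ 2 ≤ (‖B N‖ + u N) ^ 2 := pow_le_pow_left₀ (norm_nonneg _) h1 2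
    have h6 : ‖B N‖ * u N ≤ C * u N := mul_le_mul_of_nonneg_right (hBC N) (hu0 N)
    calc ‖A N‖ ^ 2 ≤ (‖B N‖ + u N) ^ 2 := h5
      _ = ‖B N‖ ^ 2 + 2 * (‖B N‖ * u N) + u N ^ 2 := by ring
      _ ≤ F N + (2 * C * u N + u N ^ 2) := by linarith [hJensen N, h6]
  have hRHS : Tendsto (fun N => F N + (2 * C * u N + u N ^ 2)) atTop
      (nhds ((r ^ 2 * ∑ h ∈ T, ∑ h' ∈ T, (γ (h - h')).re) + (2 * C * 0 + 0 ^ 2))) :=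
    hL.add ((hu_lim.const_mul (2 * C)).add (hu_lim.pow 2))
  have hgoal : (fun N => ‖((Φ N).card : ℝ)⁻¹ • ∑ g ∈ Φ N, x g‖ ^ 2)
      = fun N => ‖A N‖ ^ 2 := by
    funext N
    rw [hA]
  rw [hgoal]
  have hcb : IsCoboundedUnder (· ≤ ·) atTop (fun N => ‖A N‖ ^ 2) :=
    isCoboundedUnder_le_of_le atTop fun N => sq_nonneg ‖A N‖
  have hbd : IsBoundedUnder (· ≤ ·) atTop (fun N => F N + (2 * C * u N + u N ^ 2)) :=
    hRHS.isBoundedUnder_le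
  calc limsup (fun N => ‖A N‖ ^ 2) atTop
      ≤ limsup (fun N => F N + (2 * C * u N + u N ^ 2)) atTop :=
        limsup_le_limsup (Eventually.of_forall hpt) hcb hbd
    _ = (r ^ 2 * ∑ h ∈ T, ∑ h' ∈ T, (γ (h - h')).re) + (2 * C * 0 + 0 ^ 2) :=
        hRHS.limsup_eq
    _ = r ^ 2 * ∑ h ∈ T, ∑ h' ∈ T, (γ (h - h')).re := by ring
    _ ≤ M + ε := hLle
end

section
/- Let G be a countable abelian group, let k ≥ 2, and let X be an ergodic G-system which is k-divisible. Then for every d ≤ k the group P_{<d}(X, S¹) of phase polynomials of degree < d is divisible: for every phase polynomial P : X → S¹ of degree < d and every integer n ≥ 1 there exists a phase polynomial Q : X → S¹ of degree < d with Q^n = P μ-almost everywhere. -/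
set_option linter.unusedSectionVars false
set_option maxHeartbeats 1000000

open MeasureTheory Filter

/-- The multiplicative derivative `Δ_g f (x) = f (T_g x) ⋅ conj (f x)` of a
circle-valued function. -/
def DD {G X : Type*} (T : G → X → X) (g : G) (f : X → ℂ) : X → ℂ :=
  fun x => f (T g x) * (starRingEnd ℂ) (f x)

/-- `P : X → S¹` is a phase polynomial of degree `< k`: it is measurable, takes
values in the unit circle, and all of its `k`-fold derivatives are `1` a.e. -/
def IsPhasePoly {G X : Type*} [MeasurableSpace X] (T : G → X → X) (μ : Measure X)
    (k : ℕ) (P : X → ℂ) : Prop :=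
  Measurable P ∧ (∀ x, ‖P x‖ = 1) ∧
    ∀ l : List G, l.length = k → l.foldr (DD T) P =ᵐ[μ] fun _ => 1

/-- `lam : Gⁱ → S¹` belongs to the `i`-th spectrum of the system: it is realized
as the `i`-fold derivative of some phase polynomial of degree `< i + 1`. -/
def InSpec {G X : Type*} [MeasurableSpace X] (T : G → X → X) (μ : Measure X)
    (i : ℕ) (lam : (Fin i → G) → ℂ) : Prop :=
  ∃ P : X → ℂ, IsPhasePoly T μ (i + 1) P ∧
    ∀ gs : Fin i → G, (List.ofFn gs).foldr (DD T) P =ᵐ[μ] fun _ => lam gs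

/-- The system is `k`-divisible: for each `1 ≤ i ≤ k - 1`, every element of the
`i`-th spectrum has `n`-th roots in the `i`-th spectrum, for every `n ≥ 1`. -/
def KDivisible {G X : Type*} [MeasurableSpace X] (T : G → X → X) (μ : Measure X)
    (k : ℕ) : Prop :=
  ∀ i : ℕ, 1 ≤ i → i ≤ k - 1 → ∀ lam : (Fin i → G) → ℂ, InSpec T μ i lam →
    ∀ n : ℕ, 1 ≤ n → ∃ gam : (Fin i → G) → ℂ, InSpec T μ i gam ∧ ∀ gs, gam gs ^ n = lam gs

section Helpers

variable {G X : Type*} [MeasurableSpace X] {T : G → X → X} {μ : Measure X}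

lemma unit_cancel {z : ℂ} (h : ‖z‖ = 1) : z * (starRingEnd ℂ) z = 1 := by
  have h2 : Complex.normSq z = 1 := by
    rw [Complex.normSq_eq_norm_sq, h, one_pow]
  rw [Complex.mul_conj, h2, Complex.ofReal_one]

lemma unit_cancel' {z : ℂ} (h : ‖z‖ = 1) : (starRingEnd ℂ) z * z = 1 := by
  rw [mul_comm]; exact unit_cancel h

lemma norm_eq_one_of_pow {z : ℂ} {n : ℕ} (hn : n ≠ 0) (h : ‖z‖ ^ n = 1) : ‖z‖ = 1 := by
  rcases lt_trichotomy ‖z‖ 1 with h1 | h1 | h1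
  · exact absurd h (pow_lt_one₀ (norm_nonneg z) h1 hn).ne
  · exact h1
  · exact absurd h.symm (one_lt_pow₀ h1 hn).ne

lemma foldr_DD_mul (l : List G) (f₁ f₂ : X → ℂ) :
    l.foldr (DD T) (fun x => f₁ x * f₂ x)
      = fun x => l.foldr (DD T) f₁ x * l.foldr (DD T) f₂ x := by
  induction l with
  | nil => rfl
  | cons a l ih =>
    simp only [List.foldr_cons, ih]
    funext x
    simp only [DD, map_mul]
    ring

lemma foldr_DD_conj (l : List G) (f : X → ℂ) :
    l.foldr (DD T) (fun x => (starRingEnd ℂ) (f x))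
      = fun x => (starRingEnd ℂ) (l.foldr (DD T) f x) := by
  induction l with
  | nil => rfl
  | cons a l ih =>
    simp only [List.foldr_cons, ih]
    funext x
    simp only [DD, map_mul, Complex.conj_conj]

lemma foldr_DD_pow (l : List G) (f : X → ℂ) (n : ℕ) :
    l.foldr (DD T) (fun x => f x ^ n)
      = fun x => l.foldr (DD T) f x ^ n := by
  induction n with
  | zero =>
    simp only [pow_zero]
    induction l with
    | nil => rfl
    | cons a l ih => simp only [List.foldr_cons, ih]; funext x; simp [DD]
  | succ n ih =>
    simp only [pow_succ]
    rw [show (fun x => f x ^ n * f x) = (fun x => (fun y => f y ^ n) x * f x) from rfl,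
      foldr_DD_mul, ih]

lemma foldr_DD_measurable (hT : ∀ g, Measurable (T g)) (l : List G) {f : X → ℂ}
    (hf : Measurable f) : Measurable (l.foldr (DD T) f) := by
  induction l with
  | nil => exact hf
  | cons a l ih =>
    exact (ih.comp (hT a)).mul (Complex.continuous_conj.measurable.comp ih)

lemma foldr_DD_norm (l : List G) {f : X → ℂ} (hf : ∀ x, ‖f x‖ = 1) :
    ∀ x, ‖l.foldr (DD T) f x‖ = 1 := by
  induction l with
  | nil => exact hf
  | cons a l ih =>
    intro x
    simp only [List.foldr_cons, DD, norm_mul, RCLike.norm_conj, ih]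
    ring

lemma DD_congr_ae (hT : ∀ g, MeasurePreserving (T g) μ μ) (g : G) {f f' : X → ℂ}
    (h : f =ᵐ[μ] f') : DD T g f =ᵐ[μ] DD T g f' := by
  have h2 : (fun x => f (T g x)) =ᵐ[μ] fun x => f' (T g x) :=
    (hT g).quasiMeasurePreserving.ae_eq h
  filter_upwards [h, h2] with x hx hx2
  simp only [DD, hx, hx2]

lemma foldr_DD_congr_ae (hT : ∀ g, MeasurePreserving (T g) μ μ) (l : List G) {f f' : X → ℂ}
    (h : f =ᵐ[μ] f') : l.foldr (DD T) f =ᵐ[μ] l.foldr (DD T) f' := by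
  induction l with
  | nil => exact h
  | cons a l ih => exact DD_congr_ae hT a ih

lemma isPhasePoly_succ (hT : ∀ g, MeasurePreserving (T g) μ μ) {k : ℕ} {P : X → ℂ}
    (hP : IsPhasePoly T μ k P) : IsPhasePoly T μ (k + 1) P := by
  refine ⟨hP.1, hP.2.1, fun l hl => ?_⟩
  match l with
  | a :: l' =>
    have hl' : l'.length = k := by simpa using hl
    have h := DD_congr_ae hT a (hP.2.2 l' hl')
    rw [List.foldr_cons]
    refine h.trans ?_
    have : DD T a (fun _ => (1:ℂ)) = fun _ => 1 := by funext x; simp [DD]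
    exact Filter.EventuallyEq.of_eq this

lemma isPhasePoly_mono (hT : ∀ g, MeasurePreserving (T g) μ μ) {a b : ℕ} (h : a ≤ b)
    {P : X → ℂ} (hP : IsPhasePoly T μ a P) : IsPhasePoly T μ b P := by
  induction b, h using Nat.le_induction with
  | base => exact hP
  | succ b hb ih => exact isPhasePoly_succ hT ih

lemma isPhasePoly_mul {k : ℕ} {f g : X → ℂ} (hf : IsPhasePoly T μ k f)
    (hg : IsPhasePoly T μ k g) : IsPhasePoly T μ k (fun x => f x * g x) := by
  refine ⟨hf.1.mul hg.1, fun x => by simp [norm_mul, hf.2.1 x, hg.2.1 x], fun l hl => ?_⟩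
  rw [foldr_DD_mul]
  filter_upwards [hf.2.2 l hl, hg.2.2 l hl] with x h1 h2
  rw [h1, h2, one_mul]

lemma exists_ae_const [IsProbabilityMeasure μ]
    (herg : ∀ A : Set X, MeasurableSet A →
      (∀ g, μ (symmDiff (T g ⁻¹' A) A) = 0) → μ A = 0 ∨ μ A = 1)
    {f : X → ℂ} (hf : Measurable f)
    (hinv : ∀ g : G, (fun x => f (T g x)) =ᵐ[μ] f) :
    ∃ c : ℂ, f =ᵐ[μ] fun _ => c := by
  set ν := μ.map f with hνdef
  have hν : IsProbabilityMeasure ν := Measure.isProbabilityMeasure_map hf.aemeasurable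
  have h01 : ∀ S : Set ℂ, MeasurableSet S → ν S = 0 ∨ ν S = 1 := by
    intro S hS
    rw [hνdef, Measure.map_apply hf hS]
    refine herg _ (hf hS) fun g => ?_
    refine measure_mono_null (fun x hx => ?_) (ae_iff.mp (hinv g))
    simp only [Set.mem_symmDiff, Set.mem_preimage] at hx
    simp only [Set.mem_setOf_eq]
    rcases hx with ⟨h1, h2⟩ | ⟨h1, h2⟩
    · exact fun h => h2 (by rwa [h] at h1)
    · exact fun h => h2 (by rwa [← h] at h1)
  set D : ℕ → ℂ := TopologicalSpace.denseSeq ℂ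
  have hD : DenseRange D := TopologicalSpace.denseRange_denseSeq ℂ
  have key : ∀ m : ℕ, ∃ j : ℕ, ν (Metric.closedBall (D j) (((m:ℝ)+1)⁻¹)) = 1 := by
    intro m
    by_contra hcon
    push_neg at hcon
    have h0 : ∀ j, ν (Metric.closedBall (D j) (((m:ℝ)+1)⁻¹)) = 0 := fun j =>
      (h01 _ measurableSet_closedBall).resolve_right (hcon j)
    have hcover : (Set.univ : Set ℂ) ⊆ ⋃ j, Metric.closedBall (D j) (((m:ℝ)+1)⁻¹) := by
      intro z _
      obtain ⟨j, hj⟩ := hD.exists_dist_lt z (by positivity : (0:ℝ) < ((m:ℝ)+1)⁻¹)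
      exact Set.mem_iUnion.mpr ⟨j, Metric.mem_closedBall.mpr hj.le⟩
    have : ν Set.univ = 0 :=
      le_antisymm (le_trans (measure_mono hcover)
        (le_trans (measure_iUnion_le _) (by simp [h0]))) zero_le
    simp [measure_univ] at this
  choose j hj using key
  set C : Set ℂ := ⋂ m : ℕ, Metric.closedBall (D (j m)) (((m:ℝ)+1)⁻¹) with hCdef
  have hCm : MeasurableSet C := MeasurableSet.iInter fun m => measurableSet_closedBall
  have hCc : ν Cᶜ = 0 := by
    have : ν Cᶜ ≤ ∑' m : ℕ, ν (Metric.closedBall (D (j m)) (((m:ℝ)+1)⁻¹))ᶜ := by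
      rw [hCdef, Set.compl_iInter]
      exact measure_iUnion_le _
    have hz : ∀ m : ℕ, ν (Metric.closedBall (D (j m)) (((m:ℝ)+1)⁻¹))ᶜ = 0 := fun m =>
      (prob_compl_eq_zero_iff measurableSet_closedBall).mpr (hj m)
    simpa [hz] using this
  have hC1 : ν C = 1 := (prob_compl_eq_zero_iff hCm).mp hCc
  have hCne : C.Nonempty :=
    Set.nonempty_iff_ne_empty.mpr fun h => by simp [h] at hC1
  obtain ⟨c, hc⟩ := hCne
  have hsub : C ⊆ {c} := by
    intro z hz
    have hdist : ∀ m : ℕ, dist z c ≤ 2/(m+1) := by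
      intro m
      have h1 : dist z (D (j m)) ≤ ((m:ℝ)+1)⁻¹ := Set.mem_iInter.mp hz m
      have h2 : dist c (D (j m)) ≤ ((m:ℝ)+1)⁻¹ := Set.mem_iInter.mp hc m
      calc dist z c ≤ dist z (D (j m)) + dist c (D (j m)) := dist_triangle_right _ _ _
        _ ≤ ((m:ℝ)+1)⁻¹ + ((m:ℝ)+1)⁻¹ := add_le_add h1 h2
        _ = 2/(m+1) := by ring
    have htend : Tendsto (fun m : ℕ => 2/((m:ℝ)+1)) atTop (nhds 0) := by
      have := tendsto_one_div_add_atTop_nhds_zero_nat.const_mul (2:ℝ)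
      simpa [div_eq_mul_inv, mul_comm, mul_assoc, mul_left_comm] using this
    have : dist z c ≤ 0 := ge_of_tendsto' htend hdist
    simpa [Set.mem_singleton_iff, ← dist_le_zero] using this
  have hone : ν {c} = 1 :=
    le_antisymm prob_le_one (hC1 ▸ measure_mono hsub)
  refine ⟨c, ?_⟩
  have : μ (f ⁻¹' {c})ᶜ = 0 := by
    have h1 : μ (f ⁻¹' {c}) = 1 := by
      rw [← Measure.map_apply hf (measurableSet_singleton c)]; exact hone
    exact (prob_compl_eq_zero_iff (hf (measurableSet_singleton c))).mpr h1
  rw [Filter.EventuallyEq, ae_iff]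
  convert this using 2
  ext x; simp

/-- Any `m`-fold derivative of a phase polynomial of degree `< m + 1` is a.e.
constant, with unimodular constant. -/
lemma foldr_ae_const [IsProbabilityMeasure μ]
    (hT : ∀ g, MeasurePreserving (T g) μ μ)
    (herg : ∀ A : Set X, MeasurableSet A →
      (∀ g, μ (symmDiff (T g ⁻¹' A) A) = 0) → μ A = 0 ∨ μ A = 1)
    {m : ℕ} {P : X → ℂ} (hP : IsPhasePoly T μ (m + 1) P)
    (l : List G) (hl : l.length = m) :
    ∃ c : ℂ, ‖c‖ = 1 ∧ l.foldr (DD T) P =ᵐ[μ] fun _ => c := by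
  set F := l.foldr (DD T) P with hF
  have hFm : Measurable F := foldr_DD_measurable (fun g => (hT g).measurable) l hP.1
  have hFn : ∀ x, ‖F x‖ = 1 := foldr_DD_norm l hP.2.1
  have hinv : ∀ g : G, (fun x => F (T g x)) =ᵐ[μ] F := by
    intro g
    have h1 : DD T g F =ᵐ[μ] fun _ => 1 := hP.2.2 (g :: l) (by simp [hl])
    filter_upwards [h1] with x hx
    simp only [DD] at hx
    calc F (T g x) = F (T g x) * ((starRingEnd ℂ) (F x) * F x) := by
          rw [unit_cancel' (hFn x), mul_one]
      _ = (F (T g x) * (starRingEnd ℂ) (F x)) * F x := by ring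
      _ = 1 * F x := by rw [hx]
      _ = F x := one_mul _
  obtain ⟨c, hc⟩ := exists_ae_const herg hFm hinv
  have hne : (ae μ).NeBot := ae_neBot.mpr (IsProbabilityMeasure.ne_zero μ)
  obtain ⟨x₀, hx₀⟩ := hc.exists
  have hx₀' : F x₀ = c := hx₀
  exact ⟨c, by rw [← hx₀']; exact hFn x₀, hc⟩

end Helpers

/-- If an ergodic `G`-system is `k`-divisible (`k ≥ 2`), then for every `d ≤ k`
the group of phase polynomials of degree `< d` is divisible. -/
theorem phasePoly_divisible_of_kDivisible
    {G : Type*} [AddCommGroup G] [Countable G]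
    {X : Type*} [MeasurableSpace X] (μ : Measure X) [IsProbabilityMeasure μ]
    (T : G → X → X) (hT : ∀ g, MeasurePreserving (T g) μ μ)
    (hid : ∀ x, T 0 x = x)
    (hact : ∀ g g' x, T (g + g') x = T g (T g' x))
    (herg : ∀ A : Set X, MeasurableSet A →
      (∀ g, μ (symmDiff (T g ⁻¹' A) A) = 0) → μ A = 0 ∨ μ A = 1)
    (k : ℕ) (hk : 2 ≤ k) (hdiv : KDivisible T μ k)
    (d : ℕ) (hd : d ≤ k) (P : X → ℂ) (hP : IsPhasePoly T μ d P)
    (n : ℕ) (hn : 1 ≤ n) :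
    ∃ Q : X → ℂ, IsPhasePoly T μ d Q ∧ (fun x => Q x ^ n) =ᵐ[μ] P := by
  clear hid hact hk
  induction d using Nat.strong_induction_on generalizing P n with
  | _ d ih =>
  rcases d with _ | (_ | m)
  · -- d = 0 : P = 1 a.e.
    have h1 : P =ᵐ[μ] fun _ => 1 := hP.2.2 [] rfl
    refine ⟨fun _ => 1, ⟨measurable_const, fun x => by simp, fun l hl => ?_⟩, ?_⟩
    · rw [List.length_eq_zero_iff] at hl
      subst hl
      exact Filter.EventuallyEq.rfl
    · simpa using h1.symm
  · -- d = 1 : P is a.e. constant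
    obtain ⟨c, hc1, hc⟩ := foldr_ae_const hT herg hP [] rfl
    simp only [List.foldr_nil] at hc
    obtain ⟨z, hz⟩ := IsAlgClosed.exists_pow_nat_eq c (show 0 < n by omega)
    have hz1 : ‖z‖ = 1 := by
      apply norm_eq_one_of_pow (show n ≠ 0 by omega)
      rw [← norm_pow, hz, hc1]
    refine ⟨fun _ => z, ⟨measurable_const, fun _ => hz1, fun l hl => ?_⟩, ?_⟩
    · obtain ⟨g, rfl⟩ := List.length_eq_one_iff.mp hl
      refine Filter.EventuallyEq.of_eq ?_
      funext x
      simpa [DD] using unit_cancel hz1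
    · calc (fun _ : X => z ^ n) = fun _ => c := by funext _; rw [hz]
        _ =ᵐ[μ] P := hc.symm
  · -- d = m + 2 : inductive step
    have hm1k : m + 1 ≤ k := by omega
    -- a.e. constants of the (m+1)-fold derivatives
    have hconst : ∀ gs : Fin (m + 1) → G, ∃ c : ℂ, ‖c‖ = 1 ∧
        (List.ofFn gs).foldr (DD T) P =ᵐ[μ] fun _ => c :=
      fun gs => foldr_ae_const hT herg hP (List.ofFn gs) (by simp)
    choose lam hlamnorm hlam using hconst
    have hin : InSpec T μ (m + 1) lam := ⟨P, hP, hlam⟩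
    obtain ⟨gam, ⟨Q₀, hQ₀, hQ₀s⟩, hgamn⟩ :=
      hdiv (m + 1) (by omega) (by omega) lam hin n hn
    -- R = P ⋅ conj(Q₀)ⁿ has degree < m + 1
    set R : X → ℂ := fun x => P x * ((starRingEnd ℂ) (Q₀ x)) ^ n with hRdef
    have hRfold : ∀ l : List G, l.foldr (DD T) R
        = fun x => l.foldr (DD T) P x * ((starRingEnd ℂ) (l.foldr (DD T) Q₀ x)) ^ n := by
      intro l
      calc l.foldr (DD T) R
          = fun x => l.foldr (DD T) P x
              * l.foldr (DD T) (fun y => ((starRingEnd ℂ) (Q₀ y)) ^ n) x :=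
            foldr_DD_mul l P _
        _ = fun x => l.foldr (DD T) P x
              * (l.foldr (DD T) (fun y => (starRingEnd ℂ) (Q₀ y)) x) ^ n := by
            rw [foldr_DD_pow]
        _ = _ := by rw [foldr_DD_conj]
    have hR : IsPhasePoly T μ (m + 1) R := by
      refine ⟨hP.1.mul ((Complex.continuous_conj.measurable.comp hQ₀.1).pow_const n),
        fun x => ?_, fun l hl => ?_⟩
      · simp [hRdef, norm_mul, norm_pow, RCLike.norm_conj, hP.2.1 x, hQ₀.2.1 x]
      · -- any list of length m+1 comes from a tuple
        set gs : Fin (m + 1) → G := fun i => l.get (Fin.cast hl.symm i) with hgsdef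
        have hofn : List.ofFn gs = l := by
          apply List.ext_getElem (by simp [hl])
          intro i h1 h2
          rw [List.getElem_ofFn]
          simp [hgsdef]
        have hPl : l.foldr (DD T) P =ᵐ[μ] fun _ => lam gs := hofn ▸ hlam gs
        have hQl : l.foldr (DD T) Q₀ =ᵐ[μ] fun _ => gam gs := hofn ▸ hQ₀s gs
        rw [hRfold l]
        filter_upwards [hPl, hQl] with x hx1 hx2
        rw [hx1, hx2, ← map_pow, hgamn gs]
        exact unit_cancel (hlamnorm gs)
    -- apply the inductive hypothesis to R
    obtain ⟨R', hR', hR'n⟩ := ih (m + 1) (by omega) hm1k R hR n hn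
    refine ⟨fun x => R' x * Q₀ x, isPhasePoly_mul (isPhasePoly_succ hT hR') hQ₀, ?_⟩
    filter_upwards [hR'n] with x hx
    have h1 : (starRingEnd ℂ) (Q₀ x) * Q₀ x = 1 := unit_cancel' (hQ₀.2.1 x)
    calc (R' x * Q₀ x) ^ n = R' x ^ n * Q₀ x ^ n := mul_pow _ _ _
      _ = (P x * ((starRingEnd ℂ) (Q₀ x)) ^ n) * Q₀ x ^ n := by rw [hx]
      _ = P x * ((starRingEnd ℂ) (Q₀ x) * Q₀ x) ^ n := by rw [mul_pow]; ring
      _ = P x := by rw [h1, one_pow, mul_one]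
end

section
/- Let G be a countable torsion-free abelian group and let m ≥ 1. Then the group SML_m(G, S¹) of symmetric multilinear maps from G^m to the circle is divisible: for every symmetric multilinear map λ : G^m → S¹ and every integer n ≥ 1 there exists a symmetric multilinear map μ : G^m → S¹ with μ(g₁,…,g_m)^n = λ(g₁,…,g_m) for all g₁,…,g_m ∈ G. -/
/-- `lam : G^m → ℂ` is multilinear: a homomorphism in each coordinate. -/
def IsMultilinearMap' {G : Type*} [AddCommGroup G] {m : ℕ} (lam : (Fin m → G) → ℂ) : Prop :=
  ∀ (v : Fin m → G) (i : Fin m) (g g' : G),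
    lam (Function.update v i (g + g')) =
      lam (Function.update v i g) * lam (Function.update v i g')

/-- `lam : G^m → ℂ` is symmetric: invariant under all permutations of coordinates. -/
def IsSymmetricMap' {G : Type*} [AddCommGroup G] {m : ℕ} (lam : (Fin m → G) → ℂ) : Prop :=
  ∀ (v : Fin m → G) (σ : Equiv.Perm (Fin m)), lam (v ∘ σ) = lam v

set_option linter.unusedSectionVars false
set_option linter.unusedVariables false

noncomputable def rt (n : ℕ) (z : ℂ) : ℂ := Complex.exp (Complex.log z / n)

lemma rt_pow {n : ℕ} (hn : 1 ≤ n) {z : ℂ} (hz : z ≠ 0) : rt n z ^ n = z := by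
  have hn0 : (n : ℂ) ≠ 0 := Nat.cast_ne_zero.mpr (by omega)
  rw [rt, ← Complex.exp_nat_mul, mul_div_cancel₀ _ hn0]
  exact Complex.exp_log hz

lemma norm_rt {n : ℕ} {z : ℂ} (hz : ‖z‖ = 1) : ‖rt n z‖ = 1 := by
  have h1 : (Complex.log z / n).re = (Complex.log z).re / n := by
    rcases eq_or_ne (n : ℝ) 0 with h | h
    · rw [Complex.div_re]; simp [h, Complex.normSq_apply]
    · rw [Complex.div_re]
      have : ((n : ℂ)).im = 0 := by simp
      rw [Complex.normSq_apply]
      simp only [Complex.natCast_re, Complex.natCast_im, mul_zero, zero_mul, add_zero, zero_div]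
      rw [mul_div_mul_right _ _ h]
  rw [rt, Complex.norm_exp, h1, Complex.log_re, hz]
  simp

lemma rt_ne_zero {n : ℕ} {z : ℂ} (hz : ‖z‖ = 1) : rt n z ≠ 0 := by
  intro h
  have := norm_rt (n := n) hz
  rw [h] at this; simp at this

section FF
variable {H : Type*} [AddCommGroup H] {κ : Type*} [Fintype κ] [DecidableEq κ]
  {m : ℕ} (e : Module.Basis κ ℤ H) (c : (Fin m → κ) → ℂ)

noncomputable def FF : (Fin m → H) → ℂ :=
  fun v => ∏ j : Fin m → κ, c j ^ (∏ i, e.repr (v i) (j i))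

lemma FF_exponent (v : Fin m → H) (i : Fin m) (x : H) (j : Fin m → κ) :
    (∏ i', e.repr (Function.update v i x i') (j i'))
      = e.repr x (j i) * ∏ i' ∈ Finset.univ.erase i, e.repr (v i') (j i') := by
  rw [← Finset.mul_prod_erase Finset.univ _ (Finset.mem_univ i)]
  congr 1
  · rw [Function.update_self]
  · exact Finset.prod_congr rfl fun i' hi' => by
      rw [Function.update_of_ne (Finset.ne_of_mem_erase hi')]

lemma FF_ml (hc0 : ∀ j, c j ≠ 0) : IsMultilinearMap' (FF e c) := by
  intro v i g g'
  unfold FF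
  rw [← Finset.prod_mul_distrib]
  refine Finset.prod_congr rfl fun j _ => ?_
  rw [← zpow_add₀ (hc0 j)]
  congr 1
  rw [FF_exponent, FF_exponent, FF_exponent, map_add, Finsupp.add_apply, add_mul]

lemma FF_norm (hc1 : ∀ j, ‖c j‖ = 1) (v : Fin m → H) : ‖FF e c v‖ = 1 := by
  unfold FF
  rw [norm_prod]
  refine Finset.prod_eq_one fun j _ => ?_
  rw [norm_zpow, hc1, one_zpow]

lemma FF_sym (hcs : ∀ (j : Fin m → κ) (σ : Equiv.Perm (Fin m)), c (j ∘ σ) = c j) :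
    IsSymmetricMap' (FF e c) := by
  intro v σ
  unfold FF
  let E : (Fin m → κ) ≃ (Fin m → κ) :=
    ⟨fun j => j ∘ σ.symm, fun j => j ∘ σ,
     fun j => by funext i; simp, fun j => by funext i; simp⟩
  rw [← Equiv.prod_comp E (fun j => c j ^ (∏ i, e.repr (v i) (j i)))]
  refine Finset.prod_congr rfl fun j _ => ?_
  show c j ^ (∏ i, e.repr ((v ∘ σ) i) (j i)) = c (j ∘ σ.symm) ^ (∏ i, e.repr (v i) (j (σ.symm i)))
  rw [hcs j σ.symm]
  congr 1
  rw [← Equiv.prod_comp σ (fun i => e.repr (v i) (j (σ.symm i)))]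
  refine Finset.prod_congr rfl fun i _ => ?_
  simp

lemma FF_basis (j : Fin m → κ) :
    FF e c (fun i => e (j i)) = c j := by
  unfold FF
  rw [Finset.prod_eq_single j]
  · rw [Finset.prod_eq_one, zpow_one]
    intro i _
    rw [Module.Basis.repr_self, Finsupp.single_apply, if_pos rfl]
  · intro j' _ hj'
    have : ∃ i, j i ≠ j' i := by
      by_contra h
      push_neg at h
      exact hj' (funext fun i => (h i).symm)
    obtain ⟨i, hi⟩ := this
    have : (∏ i, e.repr (e (j i)) (j' i)) = 0 := by
      apply Finset.prod_eq_zero (Finset.mem_univ i)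
      rw [Module.Basis.repr_self, Finsupp.single_apply, if_neg hi]
    rw [this, zpow_zero]
  · intro h; exact absurd (Finset.mem_univ j) h

end FF

lemma ml_update_zero {H : Type*} [AddCommGroup H] {m : ℕ} {f : (Fin m → H) → ℂ}
    (hf : IsMultilinearMap' f) (hf0 : ∀ v, f v ≠ 0) (v : Fin m → H) (i : Fin m) :
    f (Function.update v i 0) = 1 := by
  have := hf v i 0 0
  rw [add_zero] at this
  have h0 := hf0 (Function.update v i 0)
  field_simp at this
  tauto

lemma multilinear_eq_of_eq_on_gen {H : Type*} [AddCommGroup H] {m : ℕ}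
    {f g : (Fin m → H) → ℂ} (hf : IsMultilinearMap' f) (hg : IsMultilinearMap' g)
    (hf0 : ∀ v, f v ≠ 0) (hg0 : ∀ v, g v ≠ 0)
    (T : Set H) (hT : AddSubgroup.closure T = ⊤)
    (hfg : ∀ v : Fin m → H, (∀ i, v i ∈ T) → f v = g v) :
    ∀ v, f v = g v := by
  suffices h : ∀ k : ℕ, ∀ v : Fin m → H, (∀ i : Fin m, k ≤ (i : ℕ) → v i ∈ T) → f v = g v by
    intro v
    exact h m v (fun i hi => absurd hi (by omega))
  intro k
  induction k with
  | zero => exact fun v hv => hfg v fun i => hv i (Nat.zero_le _)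
  | succ k ih =>
    intro v hv
    by_cases hk : k < m
    · set i₀ : Fin m := ⟨k, hk⟩ with hi₀
      let S : AddSubgroup H :=
      { carrier := {w | f (Function.update v i₀ w) = g (Function.update v i₀ w)}
        zero_mem' := by
          simp only [Set.mem_setOf_eq]
          rw [ml_update_zero hf hf0, ml_update_zero hg hg0]
        add_mem' := by
          intro a b ha hb
          simp only [Set.mem_setOf_eq] at *
          rw [hf v i₀ a b, hg v i₀ a b, ha, hb]
        neg_mem' := by
          intro a ha
          simp only [Set.mem_setOf_eq] at *
          have hfa := hf v i₀ a (-a)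
          have hga := hg v i₀ a (-a)
          rw [add_neg_cancel, ml_update_zero hf hf0] at hfa
          rw [add_neg_cancel, ml_update_zero hg hg0] at hga
          have h1 : f (Function.update v i₀ (-a)) = (f (Function.update v i₀ a))⁻¹ :=
            eq_inv_of_mul_eq_one_right hfa.symm
          have h2 : g (Function.update v i₀ (-a)) = (g (Function.update v i₀ a))⁻¹ :=
            eq_inv_of_mul_eq_one_right hga.symm
          rw [h1, h2, ha] }
      have hTS : T ⊆ S := by
        intro w hw
        show f (Function.update v i₀ w) = g (Function.update v i₀ w)
        refine ih (Function.update v i₀ w) fun i hi => ?_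
        by_cases h : i = i₀
        · subst h; rw [Function.update_self]; exact hw
        · rw [Function.update_of_ne h]
          refine hv i ?_
          have : (i : ℕ) ≠ k := fun hcon => h (Fin.ext hcon)
          omega
      have hS : ∀ w, w ∈ S := by
        have : AddSubgroup.closure T ≤ S := AddSubgroup.closure_le S |>.mpr hTS
        rw [hT] at this
        exact fun w => this (AddSubgroup.mem_top w)
      have h3 : f (Function.update v i₀ (v i₀)) = g (Function.update v i₀ (v i₀)) := hS (v i₀)
      simpa [Function.update_eq_self] using h3
    · exact ih v fun i hi => hv i (by omega)

lemma coe_update {G : Type*} [AddCommGroup G] {m : ℕ} (H : Submodule ℤ G)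
    (v : Fin m → H) (i : Fin m) (x : H) :
    (fun j => ((Function.update v i x j : H) : G)) =
      Function.update (fun j => ((v j : H) : G)) i (x : G) := by
  funext j
  by_cases h : j = i
  · subst h; rw [Function.update_self, Function.update_self]
  · rw [Function.update_of_ne h, Function.update_of_ne h]

lemma finite_case {G : Type*} [AddCommGroup G] {m : ℕ}
    (lam : (Fin m → G) → ℂ) (hcirc : ∀ v, ‖lam v‖ = 1)
    (hml : IsMultilinearMap' lam) (hsym : IsSymmetricMap' lam)
    (n : ℕ) (hn : 1 ≤ n)
    (H : Submodule ℤ G) [Module.Finite ℤ H] [NoZeroSMulDivisors ℤ G] :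
    ∃ μH : (Fin m → H) → ℂ, (∀ v, ‖μH v‖ = 1) ∧ IsMultilinearMap' μH ∧ IsSymmetricMap' μH ∧
      ∀ v : Fin m → H, μH v ^ n = lam (fun i => (v i : G)) := by
  classical
  haveI : Module.Free ℤ H := Module.free_of_finite_type_torsion_free'
  set κ := Module.Free.ChooseBasisIndex ℤ H
  set e : Module.Basis κ ℤ H := Module.Free.chooseBasis ℤ H
  set lamH : (Fin m → H) → ℂ := fun v => lam (fun i => (v i : G)) with hlamH
  set c : (Fin m → κ) → ℂ := fun j => rt n (lamH (fun i => e (j i))) with hc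
  have hc1 : ∀ j, ‖c j‖ = 1 := fun j => norm_rt (hcirc _)
  have hc0 : ∀ j, c j ≠ 0 := fun j => rt_ne_zero (hcirc _)
  have hcn : ∀ j, c j ^ n = lamH (fun i => e (j i)) := by
    intro j
    refine rt_pow hn fun h => ?_
    have := hcirc (fun i => ((e (j i) : H) : G))
    rw [show lam (fun i => ((e (j i) : H) : G)) = lamH (fun i => e (j i)) from rfl, h] at this
    simp at this
  have hcs : ∀ (j : Fin m → κ) (σ : Equiv.Perm (Fin m)), c (j ∘ σ) = c j := by
    intro j σ
    have : lamH (fun i => e ((j ∘ σ) i)) = lamH ((fun i => (e (j i) : H)) ∘ σ) := rfl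
    rw [hc]
    show rt n (lamH fun i => e ((j ∘ σ) i)) = rt n (lamH fun i => e (j i))
    rw [this]
    congr 1
    show lam ((fun i => ((e (j i) : H) : G)) ∘ σ) = lam (fun i => ((e (j i) : H) : G))
    exact hsym _ σ
  have hlamH_ml : IsMultilinearMap' lamH := by
    intro v i g g'
    show lam (fun j => ((Function.update v i (g + g') j : H) : G)) =
      lam (fun j => ((Function.update v i g j : H) : G)) *
        lam (fun j => ((Function.update v i g' j : H) : G))
    rw [coe_update, coe_update, coe_update]
    have : ((g + g' : H) : G) = (g : G) + (g' : G) := rfl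
    rw [this]
    exact hml _ i _ _
  have hlamH0 : ∀ v, lamH v ≠ 0 := by
    intro v h
    have := hcirc (fun i => ((v i : H) : G))
    rw [show lam (fun i => ((v i : H) : G)) = lamH v from rfl, h] at this
    simp at this
  have hT : AddSubgroup.closure (Set.range (e : κ → H)) = ⊤ := by
    rw [eq_top_iff]
    intro w _
    have hw : w ∈ Submodule.span ℤ (Set.range (e : κ → H)) := by
      rw [Module.Basis.span_eq e]; trivial
    rw [← Submodule.span_int_eq_addSubgroupClosure]
    exact hw
  have key : ∀ v : Fin m → H, FF e c v ^ n = lamH v := by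
    refine multilinear_eq_of_eq_on_gen (f := fun v => FF e c v ^ n) (g := lamH)
      ?_ hlamH_ml ?_ hlamH0 (Set.range (e : κ → H)) hT ?_
    · intro v i g g'
      simp only
      rw [FF_ml e c hc0 v i g g', mul_pow]
    · intro v
      apply pow_ne_zero
      intro h
      have := FF_norm e c hc1 v
      rw [h] at this; simp at this
    · intro v hv
      choose j hj using hv
      have hvj : v = fun i => e (j i) := by funext i; exact (hj i).symm
      rw [hvj]
      rw [FF_basis e c j, hcn j]
  exact ⟨FF e c, FF_norm e c hc1, FF_ml e c hc0, FF_sym e c hcs, key⟩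

lemma lift_update {G : Type*} [AddCommGroup G] (H : Submodule ℤ G) {m : ℕ}
    (v : Fin m → G) (i : Fin m) (x : G)
    (hv : ∀ j, v j ∈ H) (hx : x ∈ H) (hall : ∀ j, Function.update v i x j ∈ H) :
    (fun j => (⟨Function.update v i x j, hall j⟩ : H)) =
      Function.update (fun j => (⟨v j, hv j⟩ : H)) i ⟨x, hx⟩ := by
  funext j
  by_cases h : j = i
  · subst h
    apply Subtype.ext
    simp
  · apply Subtype.ext
    simp [Function.update_of_ne h]

/-- For a countable torsion-free abelian group `G`, the group `SML_m(G, S¹)` of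
symmetric multilinear maps `G^m → S¹` is divisible. -/
theorem SML_divisible
    {G : Type*} [AddCommGroup G] [Countable G]
    (htf : ∀ (g : G) (n : ℕ), 0 < n → n • g = 0 → g = 0)
    (m : ℕ) (hm : 1 ≤ m) (lam : (Fin m → G) → ℂ)
    (hcirc : ∀ v, ‖lam v‖ = 1)
    (hml : IsMultilinearMap' lam) (hsym : IsSymmetricMap' lam)
    (n : ℕ) (hn : 1 ≤ n) :
    ∃ μ : (Fin m → G) → ℂ, (∀ v, ‖μ v‖ = 1) ∧
      IsMultilinearMap' μ ∧ IsSymmetricMap' μ ∧ ∀ v, μ v ^ n = lam v := by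
  classical
  haveI : NoZeroSMulDivisors ℤ G := by
    constructor
    intro a g h
    rcases eq_or_ne a 0 with ha | ha
    · exact Or.inl ha
    · refine Or.inr (htf g a.natAbs (Int.natAbs_pos.mpr ha) ?_)
      rcases Int.natAbs_eq a with he | he
      · rw [← natCast_zsmul, ← he, h]
      · rw [← natCast_zsmul, ← neg_neg ((a.natAbs : ℤ) • g), ← neg_zsmul, ← he, h, neg_zero]
  set Sph := Metric.sphere (0 : ℂ) 1 with hSph
  let Y := (Fin m → G) → Sph
  haveI : CompactSpace Y := by infer_instance
  let I := ((Fin m → G) × (Fin m) × G × G) ⊕ (((Fin m → G) × Equiv.Perm (Fin m)) ⊕ (Fin m → G))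
  let A : I → Set Y := fun cc =>
    match cc with
    | Sum.inl (v, i, g, g') => {y : Y |
        ((y (Function.update v i (g + g')) : ℂ)) =
          (y (Function.update v i g) : ℂ) * (y (Function.update v i g') : ℂ)}
    | Sum.inr (Sum.inl (v, σ)) => {y : Y | ((y (v ∘ σ) : ℂ)) = (y v : ℂ)}
    | Sum.inr (Sum.inr v) => {y : Y | ((y v : ℂ)) ^ n = lam v}
  have hclosed : ∀ cc, IsClosed (A cc) := by
    rintro (⟨v, i, g, g'⟩ | ⟨v, σ⟩ | v)
    · exact isClosed_eq (continuous_subtype_val.comp (continuous_apply _))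
        ((continuous_subtype_val.comp (continuous_apply _)).mul
          (continuous_subtype_val.comp (continuous_apply _)))
    · exact isClosed_eq (continuous_subtype_val.comp (continuous_apply _))
        (continuous_subtype_val.comp (continuous_apply _))
    · exact isClosed_eq ((continuous_subtype_val.comp (continuous_apply _)).pow n)
        continuous_const
  have hfip : ∀ u : Finset I, (⋂ cc ∈ u, A cc).Nonempty := by
    intro u
    -- collect elements
    let elems : I → Finset G := fun cc =>
      match cc with
      | Sum.inl (v, _, g, g') => (Finset.image v Finset.univ) ∪ {g, g'}
      | Sum.inr (Sum.inl (v, _)) => Finset.image v Finset.univ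
      | Sum.inr (Sum.inr v) => Finset.image v Finset.univ
    let s : Finset G := u.biUnion elems
    let H : Submodule ℤ G := Submodule.span ℤ (s : Set G)
    haveI : Module.Finite ℤ H := Module.Finite.span_of_finite ℤ s.finite_toSet
    obtain ⟨μH, hμH1, hμHml, hμHsym, hμHpow⟩ := finite_case lam hcirc hml hsym n hn H
    have hμHsphere : ∀ v, μH v ∈ Sph := by
      intro v
      rw [hSph, mem_sphere_zero_iff_norm]
      exact hμH1 v
    let y₀ : Y := fun v =>
      if h : ∀ i, v i ∈ H then ⟨μH (fun i => ⟨v i, h i⟩), hμHsphere _⟩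
      else ⟨1, by rw [hSph, mem_sphere_zero_iff_norm]; simp⟩
    have hy₀ : ∀ (v : Fin m → G) (h : ∀ i, v i ∈ H),
        (y₀ v : ℂ) = μH (fun i => ⟨v i, h i⟩) := by
      intro v h
      simp only [y₀, dif_pos h]
    refine ⟨y₀, ?_⟩
    simp only [Set.mem_iInter]
    intro cc hcc
    have hmem : ∀ g ∈ elems cc, g ∈ H :=
      fun g hg => Submodule.subset_span (Finset.mem_coe.mpr (Finset.mem_biUnion.mpr ⟨cc, hcc, hg⟩))
    match cc with
    | Sum.inl (v, i, g, g') =>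
      have hv : ∀ j, v j ∈ H := fun j => hmem (v j) (by
        simp only [elems, Finset.mem_union]
        exact Or.inl (Finset.mem_image_of_mem v (Finset.mem_univ j)))
      have hg : g ∈ H := hmem g (by simp [elems])
      have hg' : g' ∈ H := hmem g' (by simp [elems])
      have h1 : ∀ j, Function.update v i (g + g') j ∈ H := by
        intro j; by_cases h : j = i
        · subst h; rw [Function.update_self]; exact H.add_mem hg hg'
        · rw [Function.update_of_ne h]; exact hv j
      have h2 : ∀ j, Function.update v i g j ∈ H := by
        intro j; by_cases h : j = i
        · subst h; rw [Function.update_self]; exact hg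
        · rw [Function.update_of_ne h]; exact hv j
      have h3 : ∀ j, Function.update v i g' j ∈ H := by
        intro j; by_cases h : j = i
        · subst h; rw [Function.update_self]; exact hg'
        · rw [Function.update_of_ne h]; exact hv j
      show (y₀ (Function.update v i (g + g')) : ℂ) =
          (y₀ (Function.update v i g) : ℂ) * (y₀ (Function.update v i g') : ℂ)
      rw [hy₀ _ h1, hy₀ _ h2, hy₀ _ h3,
        lift_update H v i (g + g') hv (H.add_mem hg hg') h1,
        lift_update H v i g hv hg h2, lift_update H v i g' hv hg' h3]
      have : (⟨g + g', H.add_mem hg hg'⟩ : H) = ⟨g, hg⟩ + ⟨g', hg'⟩ := rfl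
      rw [this]
      exact hμHml _ i _ _
    | Sum.inr (Sum.inl (v, σ)) =>
      have hv : ∀ j, v j ∈ H := fun j => hmem (v j) (by
        simp only [elems]
        exact Finset.mem_image_of_mem v (Finset.mem_univ j))
      have hvσ : ∀ j, (v ∘ σ) j ∈ H := fun j => hv (σ j)
      show (y₀ (v ∘ σ) : ℂ) = (y₀ v : ℂ)
      rw [hy₀ _ hvσ, hy₀ _ hv]
      have : (fun i => (⟨(v ∘ σ) i, hvσ i⟩ : H)) = (fun i => (⟨v i, hv i⟩ : H)) ∘ σ := rfl
      rw [this]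
      exact hμHsym _ σ
    | Sum.inr (Sum.inr v) =>
      have hv : ∀ j, v j ∈ H := fun j => hmem (v j) (by
        simp only [elems]
        exact Finset.mem_image_of_mem v (Finset.mem_univ j))
      show (y₀ v : ℂ) ^ n = lam v
      rw [hy₀ _ hv, hμHpow]
  have hne : (⋂ cc : I, A cc).Nonempty := by
    by_contra h
    rw [Set.not_nonempty_iff_eq_empty] at h
    obtain ⟨u, hu⟩ := (isCompact_univ (X := Y)).elim_finite_subfamily_closed A hclosed
      (by rw [Set.univ_inter]; exact h)
    rw [Set.univ_inter] at hu
    exact absurd hu (Set.nonempty_iff_ne_empty.mp (hfip u))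
  obtain ⟨y, hy⟩ := hne
  rw [Set.mem_iInter] at hy
  refine ⟨fun v => (y v : ℂ), ?_, ?_, ?_, ?_⟩
  · intro v
    exact mem_sphere_zero_iff_norm.mp (y v).2
  · intro v i g g'
    exact hy (Sum.inl (v, i, g, g'))
  · intro v σ
    exact hy (Sum.inr (Sum.inl (v, σ)))
  · intro v
    exact hy (Sum.inr (Sum.inr v))
end

section
/- Let G be a countable torsion-free abelian group and let k ≥ 2. Then for every ergodic G-system (X, μ, T) there exists an extension π : (Y, ν, S) → (X, μ, T) of G-systems such that X is k-divisible in Y: for every 1 ≤ i ≤ k−1, every λ ∈ Spec_i(X) and every integer n ≥ 1, there exists a phase polynomial Q : Y → S¹ of degree < i+1 such that (Δ_{g₁}⋯Δ_{g_i} Q(y))^n = λ(g₁,…,g_i) for ν-a.e. y and all g₁,…,g_i ∈ G. -/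
open MeasureTheory Filter

universe u

namespace KD

open Complex ComplexConjugate

variable {G H X W M : Type*}

/-- Translation system on an additive group. -/
def tr [Add G] : G → G → G := fun h g => g + h

/-- Iterated multiplicative derivative along a list. -/
def Dl (T : G → X → X) (l : List G) (f : X → ℂ) : X → ℂ := l.foldr (DD T) f

@[simp] lemma Dl_nil (T : G → X → X) (f : X → ℂ) : Dl T [] f = f := rfl

@[simp] lemma Dl_cons (T : G → X → X) (h : G) (l : List G) (f : X → ℂ) :
    Dl T (h :: l) f = DD T h (Dl T l f) := rfl

lemma DD_apply (T : G → X → X) (h : G) (f : X → ℂ) (x : X) :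
    DD T h f x = f (T h x) * conj (f x) := rfl

lemma Dl_mul (T : G → X → X) :
    ∀ (l : List G) (f g : X → ℂ),
      Dl T l (fun x => f x * g x) = fun x => Dl T l f x * Dl T l g x := by
  intro l
  induction l with
  | nil => intro f g; rfl
  | cons h l ih =>
    intro f g
    funext x
    simp only [Dl_cons, DD_apply, ih]
    simp only [map_mul]
    ring

lemma Dl_one (T : G → X → X) (l : List G) :
    Dl T l (fun _ => (1 : ℂ)) = fun _ => (1 : ℂ) := by
  induction l with
  | nil => rfl
  | cons h l ih => funext x; simp [Dl_cons, DD_apply, ih]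

lemma Dl_norm (T : G → X → X) :
    ∀ (l : List G) (f : X → ℂ), (∀ x, ‖f x‖ = 1) → ∀ x, ‖Dl T l f x‖ = 1 := by
  intro l
  induction l with
  | nil => intro f hf x; exact hf x
  | cons h l ih =>
    intro f hf x
    simp only [Dl_cons, DD_apply, norm_mul, RCLike.norm_conj]
    rw [ih f hf, ih f hf, one_mul]

lemma Dl_pow (T : G → X → X) (n : ℕ) :
    ∀ (l : List G) (f : X → ℂ),
      Dl T l (fun x => f x ^ n) = fun x => Dl T l f x ^ n := by
  intro l
  induction l with
  | nil => intro f; rfl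
  | cons h l ih =>
    intro f
    funext x
    simp only [Dl_cons, DD_apply, ih, map_pow]
    ring

lemma Dl_const (T : G → X → X) {c : ℂ} (hc : ‖c‖ = 1) :
    ∀ (l : List G), l ≠ [] → Dl T l (fun _ => c) = fun _ => (1 : ℂ) := by
  intro l
  induction l with
  | nil => intro hl; exact absurd rfl hl
  | cons h l ih =>
    intro _
    rcases eq_or_ne l [] with rfl | hl
    · funext x
      simp only [Dl_cons, Dl_nil, DD_apply, Complex.mul_conj]
      rw [Complex.normSq_eq_norm_sq, hc]
      norm_num
    · funext x
      simp [Dl_cons, DD_apply, ih hl]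

lemma Dl_mul_const (T : G → X → X) {c : ℂ} (hc : ‖c‖ = 1) (l : List G) (hl : l ≠ [])
    (f : X → ℂ) : Dl T l (fun x => f x * c) = Dl T l f := by
  rw [Dl_mul T l f (fun _ => c), Dl_const T hc l hl]
  funext x; simp

/-- The key equivariance lemma: derivatives commute with equivariant maps. -/
lemma Dl_equivariant (T : G → X → X) (R : H → W → W) (e : H → G) (p : W → X)
    (hcom : ∀ h w, p (R h w) = T (e h) (p w)) :
    ∀ (l : List H) (f : X → ℂ) (w : W),
      Dl R l (fun z => f (p z)) w = Dl T (l.map e) f (p w) := by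
  intro l
  induction l with
  | nil => intro f w; rfl
  | cons h l ih =>
    intro f w
    simp only [Dl_cons, DD_apply, List.map_cons, ih, hcom]

/-- Iterated additive derivative (for real-valued functions). -/
def Da (T : G → X → X) (l : List G) (F : X → ℝ) : X → ℝ :=
  l.foldr (fun h FF => fun x => FF (T h x) - FF x) F

@[simp] lemma Da_nil (T : G → X → X) (F : X → ℝ) : Da T [] F = F := rfl

@[simp] lemma Da_cons (T : G → X → X) (h : G) (l : List G) (F : X → ℝ) :
    Da T (h :: l) F = fun x => Da T l F (T h x) - Da T l F x := rfl

lemma Da_add (T : G → X → X) :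
    ∀ (l : List G) (F F' : X → ℝ),
      Da T l (fun x => F x + F' x) = fun x => Da T l F x + Da T l F' x := by
  intro l
  induction l with
  | nil => intro F F'; rfl
  | cons h l ih => intro F F'; funext x; simp only [Da_cons, ih]; ring

lemma Da_neg (T : G → X → X) :
    ∀ (l : List G) (F : X → ℝ), Da T l (fun x => -F x) = fun x => -Da T l F x := by
  intro l
  induction l with
  | nil => intro F; rfl
  | cons h l ih => intro F; funext x; simp only [Da_cons, ih]; ring

lemma Da_div (T : G → X → X) (c : ℝ) :
    ∀ (l : List G) (F : X → ℝ), Da T l (fun x => F x / c) = fun x => Da T l F x / c := by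
  intro l
  induction l with
  | nil => intro F; rfl
  | cons h l ih => intro F; funext x; simp only [Da_cons, ih]; ring

lemma Da_zero (T : G → X → X) (l : List G) : Da T l (fun _ => (0:ℝ)) = fun _ => (0:ℝ) := by
  induction l with
  | nil => rfl
  | cons h l ih => funext x; simp [Da_cons, ih]

lemma Da_sum (T : G → X → X) {ι : Type*} (l : List G) (s : Finset ι) (F : ι → X → ℝ) :
    Da T l (fun x => ∑ j ∈ s, F j x) = fun x => ∑ j ∈ s, Da T l (F j) x := by
  classical
  induction s using Finset.induction_on with
  | empty => simpa using Da_zero T l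
  | insert _ _ hj ih =>
    rename_i a s'
    funext x
    simp only [Finset.sum_insert hj]
    rw [Da_add T l (F a) (fun x => ∑ j ∈ s', F j x)]
    simp [ih]

lemma Da_equivariant (T : G → X → X) (R : H → W → W) (e : H → G) (p : W → X)
    (hcom : ∀ h w, p (R h w) = T (e h) (p w)) :
    ∀ (l : List H) (F : X → ℝ) (w : W),
      Da R l (fun z => F (p z)) w = Da T (l.map e) F (p w) := by
  intro l
  induction l with
  | nil => intro F w; rfl
  | cons h l ih =>
    intro F w
    simp only [Da_cons, List.map_cons, ih, hcom]

/-- The exponential bridge between additive and multiplicative derivatives. -/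
lemma Dl_exp (T : G → X → X) :
    ∀ (l : List G) (F : X → ℝ) (x : X),
      Dl T l (fun z => Complex.exp (F z * Complex.I)) x
        = Complex.exp ((Da T l F x : ℝ) * Complex.I) := by
  intro l
  induction l with
  | nil => intro F x; rfl
  | cons h l ih =>
    intro F x
    simp only [Dl_cons, DD_apply, ih]
    rw [← Complex.exp_conj]
    simp only [map_mul, Complex.conj_ofReal, Complex.conj_I, Da_cons]
    rw [← Complex.exp_add]
    congr 1
    push_cast
    ring

end KD

namespace KD

open Complex ComplexConjugate

variable {G H X W M : Type*}

@[simp] lemma tr_apply [Add G] (h g : G) : tr h g = g + h := rfl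

section Group

variable [AddCommGroup G]

/-- one-step additive derivative on a group -/
def dd1 (h : G) (F : G → ℝ) : G → ℝ := fun g => F (g + h) - F g

@[simp] lemma dd1_apply (h : G) (F : G → ℝ) (g : G) : dd1 h F g = F (g + h) - F g := rfl

lemma Da_cons_tr (h : G) (l : List G) (F : G → ℝ) :
    Da tr (h :: l) F = dd1 h (Da tr l F) := rfl

lemma dd1_comm (h h' : G) (F : G → ℝ) : dd1 h (dd1 h' F) = dd1 h' (dd1 h F) := by
  funext g
  simp only [dd1_apply]
  rw [add_right_comm g h' h]
  ring

lemma Da_dd1_comm (h : G) :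
    ∀ (l : List G) (F : G → ℝ), Da tr l (dd1 h F) = dd1 h (Da tr l F) := by
  intro l
  induction l with
  | nil => intro F; rfl
  | cons a l ih =>
    intro F
    rw [Da_cons_tr, Da_cons_tr, ih, dd1_comm]

lemma Da_append (l₁ l₂ : List G) (F : G → ℝ) :
    Da tr (l₁ ++ l₂) F = Da tr l₁ (Da tr l₂ F) := by
  simp [Da, List.foldr_append]

lemma Da_append_cons (l₁ l₂ : List G) (h : G) (F : G → ℝ) :
    Da tr (l₁ ++ h :: l₂) F = dd1 h (Da tr (l₁ ++ l₂) F) := by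
  rw [Da_append, Da_cons_tr, Da_dd1_comm, Da_append]

lemma dd1_split (v w : G) (F : G → ℝ) (g : G) :
    dd1 (v + w) F g = dd1 v F (g + w) + dd1 w F g := by
  simp only [dd1_apply]
  have : g + (v + w) = g + w + v := by rw [add_comm v w, ← add_assoc]
  rw [this]
  ring

lemma Da_kill_mono {j : ℕ} {F : G → ℝ}
    (hk : ∀ l : List G, l.length = j → ∀ v, Da tr l F v = 0) :
    ∀ l : List G, l.length = j + 1 → ∀ v, Da tr l F v = 0 := by
  intro l hl v
  cases l with
  | nil => simp at hl
  | cons a l' =>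
    have hl' : l'.length = j := by simpa using hl
    rw [Da_cons_tr, dd1_apply, hk l' hl', hk l' hl', sub_self]

/-- multiplicative DD commutation on translation systems -/
lemma DD_tr_comm (h h' : G) (f : G → ℂ) :
    DD tr h (DD tr h' f) = DD tr h' (DD tr h f) := by
  funext g
  simp only [DD, tr_apply, map_mul, RingHomCompTriple.comp_apply, Complex.conj_conj]
  rw [add_right_comm g h' h]
  ring

lemma Dl_DD_comm (h : G) :
    ∀ (l : List G) (f : G → ℂ), Dl tr l (DD tr h f) = DD tr h (Dl tr l f) := by
  intro l
  induction l with
  | nil => intro f; rfl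
  | cons a l ih =>
    intro f
    rw [Dl_cons, Dl_cons, ih, DD_tr_comm]

end Group

section Deg

variable [AddCommGroup M]

private lemma pure_case (i : ℕ) (F : M × ℤ → ℝ)
    (hslice : ∀ t : ℤ, ∀ lM : List M, lM.length = i + 1 → ∀ x : M,
        Da tr lM (fun x' => F (x', t)) x = 0)
    (l : List (M × ℤ)) (hz : ∀ p ∈ l, p.2 = 0) (hlen : l.length = i + 1) (v : M × ℤ) :
    Da tr l F v = 0 := by
  have hmap : ∀ l' : List (M × ℤ), (∀ p ∈ l', p.2 = (0:ℤ)) →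
      (l'.map Prod.fst).map (fun m : M => ((m, (0:ℤ)) : M × ℤ)) = l' := by
    intro l'
    induction l' with
    | nil => intro _; rfl
    | cons p l' ih =>
      intro hz'
      simp only [List.map_cons, List.cons.injEq]
      constructor
      · have := hz' p List.mem_cons_self
        exact Prod.ext rfl this.symm
      · exact ih (fun q hq => hz' q (List.mem_cons_of_mem p hq))
  have heq := Da_equivariant (tr (G := M × ℤ)) (tr (G := M))
      (fun m : M => ((m, (0:ℤ)) : M × ℤ)) (fun x : M => ((x, v.2) : M × ℤ))
      (by intro h w; simp [Prod.ext_iff]) (l.map Prod.fst) F v.1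
  rw [hmap l hz] at heq
  have hlen' : (l.map Prod.fst).length = i + 1 := by simpa using hlen
  have := hslice v.2 (l.map Prod.fst) hlen' v.1
  rw [heq] at this
  simpa using this

theorem deg_step (i : ℕ) (F : M × ℤ → ℝ)
    (hslice : ∀ t : ℤ, ∀ lM : List M, lM.length = i + 1 → ∀ x : M,
        Da tr lM (fun x' => F (x', t)) x = 0)
    (hdelta : ∀ l : List (M × ℤ), l.length = i → ∀ v,
        Da tr l (dd1 ((0,1) : M × ℤ) F) v = 0) :
    ∀ l : List (M × ℤ), l.length = i + 1 → ∀ v, Da tr l F v = 0 := by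
  suffices Hw : ∀ Wt : ℕ, ∀ l : List (M × ℤ), (l.map (fun p => p.2.natAbs)).sum ≤ Wt →
      l.length = i + 1 → ∀ v, Da tr l F v = 0 by
    exact fun l hl v => Hw _ l le_rfl hl v
  intro Wt
  induction Wt with
  | zero =>
    intro l hw hlen v
    refine pure_case i F hslice l ?_ hlen v
    intro p hp
    have : p.2.natAbs = 0 := by
      have hmem : p.2.natAbs ∈ l.map (fun p => p.2.natAbs) := List.mem_map_of_mem hp
      have := List.single_le_sum (fun _ _ => Nat.zero_le _) _ hmem
      omega
    omega
  | succ Wt ih =>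
    intro l hw hlen v
    by_cases hz : ∀ p ∈ l, p.2 = 0
    · exact pure_case i F hslice l hz hlen v
    · push_neg at hz
      obtain ⟨p, hp, hp2⟩ := hz
      obtain ⟨l₁, l₂, rfl⟩ := List.append_of_mem hp
      rw [Da_append_cons]
      set rest := l₁ ++ l₂ with hrest_def
      have hrest : rest.length = i := by
        have := hlen
        simp only [List.length_append, List.length_cons] at this ⊢
        simp only [hrest_def, List.length_append]
        omega
      have hwrest : (rest.map (fun p => p.2.natAbs)).sum + p.2.natAbs ≤ Wt + 1 := by
        have := hw
        simp only [List.map_append, List.map_cons, List.sum_append, List.sum_cons] at this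
        simp only [hrest_def, List.map_append, List.sum_append]
        omega
      have hdelta_rest : ∀ w, dd1 ((0,1) : M × ℤ) (Da tr rest F) w = 0 := by
        intro w
        rw [← Da_dd1_comm]
        exact hdelta rest hrest w
      obtain ⟨x, m⟩ := p
      rcases (Ne.lt_or_gt hp2) with hm | hm
      · -- m < 0
        have hxm : ((x, m) : M × ℤ) = (x, m + 1) + (0, -1) := by
          simp [Prod.ext_iff]
        rw [hxm, dd1_split]
        have hterm2 : dd1 ((0,-1) : M × ℤ) (Da tr rest F) v = 0 := by
          have hv : v + ((0,-1) : M × ℤ) + ((0,1) : M × ℤ) = v := by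
            simp [Prod.ext_iff]
          have := hdelta_rest (v + ((0,-1) : M × ℤ))
          simp only [dd1_apply] at this ⊢
          rw [hv] at this
          linarith
        rw [hterm2, add_zero]
        have : dd1 ((x, m+1) : M × ℤ) (Da tr rest F) (v + (0,-1))
            = Da tr (((x, m+1) : M × ℤ) :: rest) F (v + (0,-1)) := rfl
        rw [this]
        refine ih (((x, m+1) : M × ℤ) :: rest) ?_ ?_ _
        · simp only [List.map_cons, List.sum_cons]
          have : (m+1).natAbs + 1 = m.natAbs := by omega
          omega
        · simp [hrest]
      · -- m > 0
        have hxm : ((x, m) : M × ℤ) = (x, m - 1) + (0, 1) := by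
          simp [Prod.ext_iff]
        rw [hxm, dd1_split]
        rw [hdelta_rest v, add_zero]
        have : dd1 ((x, m-1) : M × ℤ) (Da tr rest F) (v + (0,1))
            = Da tr (((x, m-1) : M × ℤ) :: rest) F (v + (0,1)) := rfl
        rw [this]
        refine ih (((x, m-1) : M × ℤ) :: rest) ?_ ?_ _
        · simp only [List.map_cons, List.sum_cons]
          have : (m-1).natAbs + 1 = m.natAbs := by omega
          omega
        · simp [hrest]

end Deg

end KD

namespace KD

open Complex ComplexConjugate

variable {M N : Type*}

/-- signed partial sums over ℤ -/
noncomputable def psum (f : ℤ → ℝ) (t : ℤ) : ℝ :=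
  if 0 ≤ t then ∑ s ∈ Finset.range t.toNat, f s
  else -∑ s ∈ Finset.range (-t).toNat, f (t + s)

@[simp] lemma psum_zero (f : ℤ → ℝ) : psum f 0 = 0 := by simp [psum]

lemma psum_succ (f : ℤ → ℝ) (t : ℤ) : psum f (t + 1) = psum f t + f t := by
  rcases le_or_gt 0 t with h | h
  · have h1 : (0:ℤ) ≤ t + 1 := by omega
    have h2 : (t+1).toNat = t.toNat + 1 := by omega
    simp only [psum, if_pos h, if_pos h1, h2, Finset.sum_range_succ]
    congr 2
    omega
  · rcases eq_or_lt_of_le (by omega : t + 1 ≤ 0) with h0 | hneg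
    · have ht : t = -1 := by omega
      subst ht
      simp [psum]
    · have hn1 : ¬ (0:ℤ) ≤ t + 1 := by omega
      have hn2 : ¬ (0:ℤ) ≤ t := by omega
      simp only [psum, if_neg hn1, if_neg hn2]
      have h2 : (-t).toNat = (-(t+1)).toNat + 1 := by omega
      rw [h2, Finset.sum_range_succ']
      have hidx : ∀ s : ℕ, f (t + ↑(s + 1)) = f (t + 1 + ↑s) := by
        intro s; congr 1; push_cast; ring
      rw [Finset.sum_congr rfl (fun s _ => hidx s)]
      have : f (t + ↑(0:ℕ)) = f t := by norm_num
      rw [this]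
      ring

/-- The central lifting property. -/
def LiftP (M : Type*) [AddCommGroup M] : Prop :=
  ∀ (i : ℕ) (φ : M → ℂ), (∀ v, ‖φ v‖ = 1) →
    (∀ l : List M, l.length = i + 1 → ∀ v, Dl tr l φ v = 1) →
    ∃ F : M → ℝ, (∀ l : List M, l.length = i + 1 → ∀ v, Da tr l F v = 0) ∧
      ∀ v, Complex.exp (F v * Complex.I) = φ v

theorem liftP_of_subsingleton (M : Type*) [AddCommGroup M] [Subsingleton M] : LiftP M := by
  intro i φ hn _hk
  refine ⟨fun _ => (φ 0).arg, ?_, ?_⟩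
  · intro l hl v
    cases l with
    | nil => simp at hl
    | cons h l' =>
      rw [Da_cons_tr, dd1_apply]
      rw [show v + h = v from Subsingleton.elim _ _]
      ring
  · intro v
    rw [show v = 0 from Subsingleton.elim v 0]
    have h1 : ‖φ 0‖ = 1 := hn 0
    have h2 := Complex.norm_mul_exp_arg_mul_I (φ 0)
    rw [h1] at h2
    simpa using h2

lemma eq_of_mul_conj_eq_one {z w : ℂ} (hw : ‖w‖ = 1) (h : z * (starRingEnd ℂ) w = 1) :
    z = w := by
  have h2 : w * (starRingEnd ℂ) w = 1 := by
    rw [Complex.mul_conj, Complex.normSq_eq_norm_sq, hw]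
    norm_num
  have h3 : z * ((starRingEnd ℂ) w * w) = w := by rw [← mul_assoc, h, one_mul]
  rw [mul_comm ((starRingEnd ℂ) w) w, h2, mul_one] at h3
  exact h3

theorem liftP_step (M : Type*) [AddCommGroup M] (hM : LiftP M) : LiftP (M × ℤ) := by
  intro i
  induction i with
  | zero =>
    intro φ hn hk
    have hconst : ∀ v, φ v = φ 0 := by
      intro v
      have h1 := hk [v] rfl 0
      simp only [Dl_cons, Dl_nil, DD_apply, tr_apply, zero_add] at h1
      exact eq_of_mul_conj_eq_one (hn 0) h1
    refine ⟨fun _ => (φ 0).arg, ?_, ?_⟩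
    · intro l hl v
      cases l with
      | nil => simp at hl
      | cons h l' =>
        have hl' : l'.length = 0 := by simpa using hl
        rw [List.length_eq_zero_iff] at hl'
        subst hl'
        simp [Da_cons_tr]
    · intro v
      rw [hconst v]
      have h1 : ‖φ 0‖ = 1 := hn 0
      have h2 := Complex.norm_mul_exp_arg_mul_I (φ 0)
      rw [h1] at h2
      simpa using h2
  | succ i ih =>
    intro φ hn hk
    set δφ : M × ℤ → ℂ := DD tr ((0,1) : M × ℤ) φ with hδφ
    have hδn : ∀ v, ‖δφ v‖ = 1 := by
      intro v
      simp only [hδφ, DD_apply, norm_mul, RCLike.norm_conj, hn, one_mul]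
    have hδk : ∀ l : List (M × ℤ), l.length = i + 1 → ∀ v, Dl tr l δφ v = 1 := by
      intro l hl v
      have h1 : Dl tr l δφ = DD tr ((0,1) : M × ℤ) (Dl tr l φ) := Dl_DD_comm _ l φ
      have h2 : Dl tr (((0,1) : M × ℤ) :: l) φ v = 1 := hk _ (by simp [hl]) v
      rw [h1]
      exact h2
    obtain ⟨Fδ, hFδk, hFδe⟩ := ih δφ hδn hδk
    set φ₀ : M → ℂ := fun x => φ (x, 0) with hφ₀
    have hemb : ∀ (h : M) (w : M), ((tr h w, (0:ℤ)) : M × ℤ) = tr ((h, (0:ℤ)) : M × ℤ) ((w, 0) : M × ℤ) := by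
      intro h w; simp [Prod.ext_iff]
    have hφ₀n : ∀ x, ‖φ₀ x‖ = 1 := fun x => hn _
    have hφ₀k : ∀ l : List M, l.length = (i + 1) + 1 → ∀ x, Dl tr l φ₀ x = 1 := by
      intro l hl x
      have := Dl_equivariant (tr (G := M × ℤ)) (tr (G := M))
        (fun m : M => ((m, (0:ℤ)) : M × ℤ)) (fun x : M => ((x, (0:ℤ)) : M × ℤ))
        (fun h w => hemb h w) l φ x
      rw [this]
      exact hk _ (by simpa using hl) _
    obtain ⟨F₀, hF₀k, hF₀e⟩ := hM (i+1) φ₀ hφ₀n hφ₀k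
    set F : M × ℤ → ℝ := fun v => F₀ v.1 + psum (fun s => Fδ (v.1, s)) v.2 with hF
    have hFδrel : ∀ v : M × ℤ, dd1 ((0,1) : M × ℤ) F v = Fδ v := by
      rintro ⟨x, t⟩
      simp only [hF, dd1_apply]
      have h1 : ((x, t) : M × ℤ) + (0, 1) = (x, t + 1) := by simp [Prod.ext_iff]
      rw [h1]
      simp only
      rw [psum_succ]
      ring
    have hexp : ∀ v, Complex.exp (F v * Complex.I) = φ v := by
      rintro ⟨x, t⟩
      induction t using Int.induction_on with
      | zero =>
        simp only [hF, psum_zero, add_zero]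
        exact hF₀e x
      | succ n ihn =>
        have hstep : F (x, (n : ℤ) + 1) = F (x, (n : ℤ)) + Fδ (x, (n : ℤ)) := by
          simp only [hF, psum_succ]; ring
        rw [hstep, Complex.ofReal_add, add_mul, Complex.exp_add, ihn, hFδe (x, (n:ℤ))]
        simp only [hδφ, DD_apply, tr_apply]
        have h1 : ((x, (n:ℤ)) : M × ℤ) + (0, 1) = (x, (n:ℤ) + 1) := by simp [Prod.ext_iff]
        rw [h1]
        rw [mul_comm (φ (x, (n:ℤ)))]
        rw [mul_assoc, mul_comm ((starRingEnd ℂ) (φ (x, (n:ℤ)))) (φ (x, (n:ℤ)))]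
        rw [Complex.mul_conj, Complex.normSq_eq_norm_sq, hn]
        norm_num
      | pred n ihn =>
        have hstep : F (x, -(n:ℤ)) = F (x, -(n:ℤ) - 1) + Fδ (x, -(n:ℤ) - 1) := by
          have : -(n:ℤ) = (-(n:ℤ) - 1) + 1 := by ring
          rw [this]
          simp only [hF, psum_succ]
          ring
        have he : Complex.exp (F (x, -(n:ℤ)) * Complex.I)
            = Complex.exp (F (x, -(n:ℤ) - 1) * Complex.I) * Complex.exp (Fδ (x, -(n:ℤ) - 1) * Complex.I) := by
          rw [hstep, Complex.ofReal_add, add_mul, Complex.exp_add]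
        rw [ihn, hFδe] at he
        simp only [hδφ, DD_apply, tr_apply] at he
        have h1 : ((x, -(n:ℤ) - 1) : M × ℤ) + (0, 1) = (x, -(n:ℤ)) := by simp [Prod.ext_iff]
        rw [h1] at he
        -- he : φ (x, -n) = exp(...) * (φ (x, -n) * conj (φ (x, -n-1)))
        have hnz : φ (x, -(n:ℤ)) ≠ 0 := by
          intro h0
          have := hn (x, -(n:ℤ))
          rw [h0] at this; simp at this
        have hcnz : (starRingEnd ℂ) (φ (x, -(n:ℤ) - 1)) ≠ 0 := by
          intro h0
          have := hn (x, -(n:ℤ) - 1)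
          rw [show φ (x, -(n:ℤ) - 1) = 0 by rwa [map_eq_zero] at h0] at this
          simp at this
        have h2 : (1:ℂ) = Complex.exp (F (x, -(n:ℤ) - 1) * Complex.I) * (starRingEnd ℂ) (φ (x, -(n:ℤ) - 1)) := by
          calc (1:ℂ) = φ (x, -(n:ℤ)) / φ (x, -(n:ℤ)) := by rw [div_self hnz]
          _ = Complex.exp (F (x, -(n:ℤ) - 1) * Complex.I) * (starRingEnd ℂ) (φ (x, -(n:ℤ) - 1)) := by
              nth_rewrite 1 [he]
              field_simp [hnz]
        have h3 : Complex.exp (F (x, -(n:ℤ) - 1) * Complex.I) * (starRingEnd ℂ) (φ (x, -(n:ℤ) - 1)) = 1 := h2.symm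
        exact eq_of_mul_conj_eq_one (hn _) h3
    refine ⟨F, ?_, hexp⟩
    have hdelta : ∀ l : List (M × ℤ), l.length = i + 1 → ∀ v,
        Da tr l (dd1 ((0,1) : M × ℤ) F) v = 0 := by
      intro l hl v
      have : dd1 ((0,1) : M × ℤ) F = Fδ := funext hFδrel
      rw [this]
      exact hFδk l hl v
    have hslice : ∀ t : ℤ, ∀ lM : List M, lM.length = (i + 1) + 1 → ∀ x : M,
        Da tr lM (fun x' => F (x', t)) x = 0 := by
      intro t lM hlM x
      have hFsplit : (fun x' : M => F (x', t))
          = fun x' => F₀ x' + psum (fun s => Fδ (x', s)) t := rfl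
      have hFδslice : ∀ (c : ℤ) (l' : List M), l'.length = i + 1 → ∀ y : M,
          Da tr l' (fun x' => Fδ (x', c)) y = 0 := by
        intro c l' hl' y
        have := Da_equivariant (tr (G := M × ℤ)) (tr (G := M))
          (fun m : M => ((m, (0:ℤ)) : M × ℤ)) (fun x' : M => ((x', c) : M × ℤ))
          (by intro h w; simp [Prod.ext_iff]) l' Fδ y
        rw [this]
        exact hFδk _ (by simpa using hl') _
      have hFδslice2 : ∀ (c : ℤ), ∀ y : M,
          Da tr lM (fun x' => Fδ (x', c)) y = 0 := by
        intro c
        exact Da_kill_mono (fun l' hl' => hFδslice c l' hl') lM hlM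
      have hpsum : ∀ y : M, Da tr lM (fun x' => psum (fun s => Fδ (x', s)) t) y = 0 := by
        intro y
        rcases le_or_gt 0 t with ht | ht
        · have : (fun x' : M => psum (fun s => Fδ (x', s)) t)
              = fun x' => ∑ s ∈ Finset.range t.toNat, Fδ (x', (s : ℤ)) := by
            funext x'; simp [psum, ht]
          rw [this, Da_sum]
          refine Finset.sum_eq_zero (fun s _ => hFδslice2 _ _)
        · have hnt : ¬ (0:ℤ) ≤ t := by omega
          have : (fun x' : M => psum (fun s => Fδ (x', s)) t)
              = fun x' => -(∑ s ∈ Finset.range (-t).toNat, Fδ (x', t + (s:ℤ))) := by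
            funext x'; simp [psum, hnt]
          rw [this, Da_neg]
          simp only
          rw [Da_sum]
          simp only
          rw [Finset.sum_eq_zero (fun s _ => hFδslice2 _ _)]
          simp
      rw [hFsplit, Da_add]
      show Da tr lM F₀ x + Da tr lM (fun x' => psum (fun s => Fδ (x', s)) t) x = 0
      rw [hF₀k lM hlM x, hpsum x]
      norm_num
    exact deg_step (i + 1) F hslice hdelta

end KD

namespace KD

open Complex ComplexConjugate

lemma liftP_congr {M N : Type*} [AddCommGroup M] [AddCommGroup N] (e : M ≃+ N)
    (hN : LiftP N) : LiftP M := by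
  intro i φ hn hk
  set ψ : N → ℂ := fun w => φ (e.symm w) with hψ
  have hcom_symm : ∀ (h : N) (w : N), e.symm (tr h w) = tr (e.symm h) (e.symm w) := by
    intro h w; simp [tr_apply, map_add]
  have hcom : ∀ (h : M) (w : M), e (tr h w) = tr (e h) (e w) := by
    intro h w; simp [tr_apply, map_add]
  have hψn : ∀ w, ‖ψ w‖ = 1 := fun w => hn _
  have hψk : ∀ l : List N, l.length = i + 1 → ∀ w, Dl tr l ψ w = 1 := by
    intro l hl w
    have := Dl_equivariant (tr (G := M)) (tr (G := N)) e.symm e.symm hcom_symm l φ w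
    rw [hψ, this]
    exact hk _ (by simpa using hl) _
  obtain ⟨F, hFk, hFe⟩ := hN i ψ hψn hψk
  refine ⟨fun v => F (e v), ?_, ?_⟩
  · intro l hl v
    have := Da_equivariant (tr (G := N)) (tr (G := M)) e e hcom l F v
    rw [this]
    exact hFk _ (by simpa using hl) _
  · intro v
    rw [hFe (e v)]
    simp [hψ]

/-- `(Fin (r+1) → ℤ) ≃+ (Fin r → ℤ) × ℤ` -/
def finSuccAddEquiv (r : ℕ) : (Fin (r+1) → ℤ) ≃+ (Fin r → ℤ) × ℤ where
  toFun f := (fun j => f j.succ, f 0)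
  invFun p := Fin.cons p.2 p.1
  left_inv f := by
    funext j
    cases j using Fin.cases with
    | zero => simp
    | succ j => simp
  right_inv p := by
    refine Prod.ext ?_ ?_
    · funext j; simp
    · simp
  map_add' f g := rfl

theorem liftP_fin : ∀ r : ℕ, LiftP (Fin r → ℤ) := by
  intro r
  induction r with
  | zero => exact liftP_of_subsingleton _
  | succ r ih => exact liftP_congr (finSuccAddEquiv r) (liftP_step _ ih)

lemma Dl_restrict {G : Type*} [AddCommGroup G] (Hs : AddSubgroup G) (f : G → ℂ) :
    ∀ (l : List G) (hl : ∀ a ∈ l, a ∈ Hs) (g : G) (hg : g ∈ Hs),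
      Dl tr l f g
        = Dl tr (l.pmap (fun a ha => (⟨a, ha⟩ : ↥Hs)) hl) (fun x : ↥Hs => f ↑x) ⟨g, hg⟩ := by
  intro l
  induction l with
  | nil => intro _ g hg; rfl
  | cons a l ih =>
    intro hl g hg
    have haH : a ∈ Hs := hl a List.mem_cons_self
    have hlH : ∀ b ∈ l, b ∈ Hs := fun b hb => hl b (List.mem_cons_of_mem a hb)
    have hsum : (⟨g, hg⟩ + ⟨a, haH⟩ : ↥Hs) = ⟨g + a, add_mem hg haH⟩ := rfl
    simp only [List.pmap, Dl_cons, DD_apply, tr_apply]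
    rw [ih hlH (g + a) (add_mem hg haH), ih hlH g hg, hsum]

lemma circle_norm (z : Circle) : ‖(z : ℂ)‖ = 1 := by
  exact Circle.norm_coe z

/-- Continuity of the iterated derivative in the function variable,
over the compact space `G → Circle`. -/
lemma contD {G : Type*} [AddCommGroup G] :
    ∀ (l : List G) (g : G),
      Continuous fun u : G → Circle => Dl tr l (fun x => ((u x : ℂ))) g := by
  intro l
  induction l with
  | nil =>
    intro g
    exact continuous_subtype_val.comp (continuous_apply g)
  | cons h l ih =>
    intro g
    exact ((ih (tr h g)).mul ((ih g).star))

/-- n-th roots of circle-valued polynomial maps on torsion-free abelian groups. -/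
theorem root_exists {G : Type*} [AddCommGroup G]
    (htf : ∀ (g : G) (m : ℕ), 0 < m → m • g = 0 → g = 0)
    (i n : ℕ) (hn : 1 ≤ n) (φ : G → ℂ)
    (hφn : ∀ g, ‖φ g‖ = 1) (hφ0 : φ 0 = 1)
    (hφk : ∀ l : List G, l.length = i + 1 → ∀ g, Dl tr l φ g = 1) :
    ∃ ρ : G → Circle, (ρ 0 = 1) ∧
      (∀ l : List G, l.length = i + 1 → ∀ g, Dl tr l (fun x => ((ρ x : ℂ))) g = 1) ∧
      (∀ g, ((ρ g : ℂ)) ^ n = φ g) := by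
  classical
  set Mset : Finset G → Set (G → Circle) := fun Fs =>
    {u | (∀ g ∈ Fs, ((u g : ℂ)) ^ n = φ g) ∧
         ∀ l : List G, (∀ a ∈ l, a ∈ Fs) → l.length = i + 1 →
           ∀ g ∈ Fs, Dl tr l (fun x => ((u x : ℂ))) g = 1} with hMset
  have closedM : ∀ Fs, IsClosed (Mset Fs) := by
    intro Fs
    have h1 : IsClosed {u : G → Circle | ∀ g ∈ Fs, ((u g : ℂ)) ^ n = φ g} := by
      have : {u : G → Circle | ∀ g ∈ Fs, ((u g : ℂ)) ^ n = φ g}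
          = ⋂ (g : G) (_ : g ∈ Fs), {u : G → Circle | ((u g : ℂ)) ^ n = φ g} := by
        ext u; simp
      rw [this]
      refine isClosed_iInter fun g => isClosed_iInter fun _ => ?_
      exact isClosed_eq ((contD [] g).pow n) continuous_const
    have h2 : IsClosed {u : G → Circle | ∀ l : List G, (∀ a ∈ l, a ∈ Fs) →
        l.length = i + 1 → ∀ g ∈ Fs, Dl tr l (fun x => ((u x : ℂ))) g = 1} := by
      have : {u : G → Circle | ∀ l : List G, (∀ a ∈ l, a ∈ Fs) → l.length = i + 1 →
            ∀ g ∈ Fs, Dl tr l (fun x => ((u x : ℂ))) g = 1}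
          = ⋂ (l : List G) (_ : ∀ a ∈ l, a ∈ Fs) (_ : l.length = i + 1) (g : G) (_ : g ∈ Fs),
              {u : G → Circle | Dl tr l (fun x => ((u x : ℂ))) g = 1} := by
        ext u; simp
      rw [this]
      refine isClosed_iInter fun l => isClosed_iInter fun _ => isClosed_iInter fun _ =>
        isClosed_iInter fun g => isClosed_iInter fun _ => ?_
      exact isClosed_eq (contD l g) continuous_const
    have : Mset Fs = _ ∩ _ := rfl
    exact h1.inter h2
  have antiM : ∀ {F1 F2 : Finset G}, F1 ⊆ F2 → Mset F2 ⊆ Mset F1 := by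
    intro F1 F2 hsub u hu
    exact ⟨fun g hg => hu.1 g (hsub hg),
      fun l hent hlen g hg => hu.2 l (fun a ha => hsub (hent a ha)) hlen g (hsub hg)⟩
  have nonM : ∀ Fs : Finset G, (Mset Fs).Nonempty := by
    intro Fs
    set Hsub : AddSubgroup G := AddSubgroup.closure (Fs : Set G) with hHsub
    haveI hfin : Module.Finite ℤ ↥Hsub := Module.Finite.iff_addGroup_fg.mpr inferInstance
    haveI : NoZeroSMulDivisors ℤ ↥Hsub := by
      refine ⟨fun {m x} h => ?_⟩
      by_cases hm : m = 0
      · exact Or.inl hm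
      · right
        have hval : m • (x : G) = 0 := by
          have := congrArg (Subtype.val) h
          simpa using this
        have hx : (x : G) = 0 := by
          rcases lt_or_gt_of_ne hm with hm' | hm'
          · have h2 : ((-m).toNat) • (x : G) = 0 := by
              have : ((-m).toNat : ℤ) • (x : G) = -(m • (x:G)) := by
                rw [Int.toNat_of_nonneg (by omega : (0:ℤ) ≤ -m)]
                rw [neg_smul]
              rw [hval, neg_zero] at this
              rw [← natCast_zsmul]
              exact this
            exact htf _ _ (by omega) h2
          · have h2 : (m.toNat) • (x : G) = 0 := by
              have : ((m.toNat : ℤ)) • (x : G) = m • (x:G) := by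
                rw [Int.toNat_of_nonneg (by omega : (0:ℤ) ≤ m)]
              rw [← natCast_zsmul]
              rw [this, hval]
            exact htf _ _ (by omega) h2
        exact Subtype.ext hx
    haveI : Module.Free ℤ ↥Hsub := Module.free_of_finite_type_torsion_free'
    set r := Fintype.card (Module.Free.ChooseBasisIndex ℤ ↥Hsub) with hr
    set b : Module.Basis (Fin r) ℤ ↥Hsub :=
      (Module.Free.chooseBasis ℤ ↥Hsub).reindex (Fintype.equivFin _) with hb
    set E : ↥Hsub ≃ₗ[ℤ] (Fin r → ℤ) := b.equivFun with hE
    set j : (Fin r → ℤ) → G := fun v => ((E.symm v : ↥Hsub) : G) with hj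
    have hj_add : ∀ a c : Fin r → ℤ, j (a + c) = j a + j c := by
      intro a c; simp [hj, map_add]
    have hjE : ∀ x : ↥Hsub, j (E x) = (x : G) := by
      intro x; simp [hj]
    set fM : (Fin r → ℤ) → ℂ := fun v => φ (j v) with hfM
    have hfMn : ∀ v, ‖fM v‖ = 1 := fun v => hφn _
    have hfMk : ∀ l : List (Fin r → ℤ), l.length = i + 1 → ∀ v, Dl tr l fM v = 1 := by
      intro l hl v
      have := Dl_equivariant (tr (G := G)) (tr (G := Fin r → ℤ)) j j
        (by intro h w; simp [tr_apply, hj_add]) l φ v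
      rw [hfM]
      rw [this]
      exact hφk _ (by simpa using hl) _
    obtain ⟨F, hFk, hFe⟩ := liftP_fin r i fM hfMn hfMk
    have hnR : ((n : ℝ)) ≠ 0 := by positivity
    set ρM : (Fin r → ℤ) → Circle := fun v => Circle.exp (F v / n) with hρM
    set u : G → Circle := fun g => if hg : g ∈ Hsub then ρM (E ⟨g, hg⟩) else 1 with hu
    have hagree : ∀ x : ↥Hsub, ((u ↑x : Circle) : ℂ) = ((ρM (E x) : Circle) : ℂ) := by
      intro x
      rw [hu]
      simp only [dif_pos x.2]
    have hnC : (n : ℂ) ≠ 0 := by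
      simp only [ne_eq, Nat.cast_eq_zero]; omega
    have hupow : ∀ x : ↥Hsub, ((u ↑x : Circle) : ℂ) ^ n = φ ↑x := by
      intro x
      rw [hagree x]
      have h1 : ((ρM (E x) : Circle) : ℂ) = Complex.exp ((F (E x) / n : ℝ) * Complex.I) := by
        rw [hρM]; simp [Circle.coe_exp]
      rw [h1, ← Complex.exp_nat_mul]
      have harg : (n : ℂ) * ((F (E x) / n : ℝ) * Complex.I) = (F (E x) : ℝ) * Complex.I := by
        push_cast
        field_simp
      rw [harg, hFe (E x)]
      show φ (j (E x)) = φ ↑x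
      rw [hjE]
    refine ⟨u, ?_, ?_⟩
    · intro g hg
      have hgH : g ∈ Hsub := AddSubgroup.subset_closure hg
      have := hupow ⟨g, hgH⟩
      simpa using this
    · intro l hent hlen g hg
      have hentH : ∀ a ∈ l, a ∈ Hsub := fun a ha => AddSubgroup.subset_closure (hent a ha)
      have hgH : g ∈ Hsub := AddSubgroup.subset_closure hg
      rw [Dl_restrict Hsub _ l hentH g hgH]
      have hfun : (fun x : ↥Hsub => ((u ↑x : Circle) : ℂ))
          = fun x : ↥Hsub => ((ρM (E x) : Circle) : ℂ) := funext hagree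
      rw [hfun]
      have hequi := Dl_equivariant (tr (G := Fin r → ℤ)) (tr (G := ↥Hsub)) (⇑E) (⇑E)
        (by intro h w; simp [tr_apply, map_add]) (l.pmap (fun a ha => (⟨a, ha⟩ : ↥Hsub)) hentH)
        (fun v => ((ρM v : Circle) : ℂ)) ⟨g, hgH⟩
      rw [hequi]
      have hexp : (fun v : Fin r → ℤ => ((ρM v : Circle) : ℂ))
          = fun v => Complex.exp ((fun w => F w / n) v * Complex.I) := by
        funext v; rw [hρM]; simp [Circle.coe_exp]
      rw [hexp, Dl_exp, Da_div]
      have hlen2 : ((l.pmap (fun a ha => (⟨a, ha⟩ : ↥Hsub)) hentH).map (⇑E)).length = i + 1 := by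
        simp [hlen]
      show Complex.exp
          (((Da tr ((l.pmap (fun a ha => (⟨a, ha⟩ : ↥Hsub)) hentH).map (⇑E)) F
            (E ⟨g, hgH⟩)) / (n:ℝ) : ℝ) * Complex.I) = 1
      rw [hFk _ hlen2]
      norm_num
  haveI : Nonempty (Finset G) := ⟨∅⟩
  have hdir : Directed (· ⊇ ·) Mset := by
    intro F1 F2
    exact ⟨F1 ∪ F2, antiM Finset.subset_union_left, antiM Finset.subset_union_right⟩
  obtain ⟨u, hu⟩ := IsCompact.nonempty_iInter_of_directed_nonempty_isCompact_isClosed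
    Mset hdir nonM (fun Fs => (closedM Fs).isCompact) closedM
  have huF : ∀ Fs : Finset G, u ∈ Mset Fs := by
    intro Fs
    exact Set.mem_iInter.mp hu Fs
  have hupow : ∀ g : G, ((u g : ℂ)) ^ n = φ g := by
    intro g
    exact (huF {g}).1 g (Finset.mem_singleton_self g)
  have hukill : ∀ l : List G, l.length = i + 1 → ∀ g,
      Dl tr l (fun x => ((u x : ℂ))) g = 1 := by
    intro l hl g
    refine (huF (insert g l.toFinset)).2 l ?_ hl g (Finset.mem_insert_self g _)
    intro a ha
    exact Finset.mem_insert_of_mem (List.mem_toFinset.mpr ha)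
  refine ⟨fun g => u g * (u 0)⁻¹, ?_, ?_, ?_⟩
  · simp
  · intro l hl g
    have hne : l ≠ [] := by
      intro h0; rw [h0] at hl; simp at hl
    have hcoe : (fun x => (((u x * (u 0)⁻¹ : Circle)) : ℂ))
        = fun x => ((u x : ℂ)) * (((u 0)⁻¹ : Circle) : ℂ) := by
      funext x; simp
    rw [hcoe, Dl_mul_const _ (circle_norm _) l hne]
    exact hukill l hl g
  · intro g
    have : (((u g * (u 0)⁻¹ : Circle)) : ℂ) = ((u g : ℂ)) * (((u 0) : ℂ))⁻¹ := by simp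
    rw [this, mul_pow, inv_pow, hupow, hupow, hφ0, inv_one, mul_one]

end KD

namespace KD

open MeasureTheory Complex ComplexConjugate

lemma extract {G : Type*} {X : Type*} [AddCommGroup G] [Countable G] [MeasurableSpace X]
    (μ : Measure X) [IsProbabilityMeasure μ]
    (T : G → X → X) (hT : ∀ g, MeasurePreserving (T g) μ μ)
    (hid : ∀ x, T 0 x = x) (hact : ∀ g g' x, T (g + g') x = T g (T g' x))
    (i : ℕ) (hi : 1 ≤ i) (lam : (Fin i → G) → ℂ) (hspec : InSpec T μ i lam) :
    ∃ φ : G → ℂ, (∀ g, ‖φ g‖ = 1) ∧ φ 0 = 1 ∧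
      (∀ gs : Fin i → G, ∀ g, Dl tr (List.ofFn gs) φ g = lam gs) ∧
      (∀ l : List G, l.length = i + 1 → ∀ g, Dl tr l φ g = 1) := by
  obtain ⟨P, hpoly, hP⟩ := hspec
  obtain ⟨hPm, hPn, _⟩ := hpoly
  have hae : ∀ᵐ x ∂μ, ∀ (gs : Fin i → G) (g : G),
      Dl T (List.ofFn gs) P (T g x) = lam gs := by
    rw [ae_all_iff]
    intro gs
    rw [ae_all_iff]
    intro g
    have h2 := ((hT g).quasiMeasurePreserving).ae_eq_comp (hP gs)
    filter_upwards [h2] with x hx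
    exact hx
  obtain ⟨x₀, hx₀⟩ := hae.exists
  have hccn : ‖(starRingEnd ℂ) (P x₀)‖ = 1 := by
    rw [RCLike.norm_conj]; exact hPn x₀
  set φ : G → ℂ := fun g => P (T g x₀) * (starRingEnd ℂ) (P x₀) with hφ
  have horb : ∀ (l : List G) (g : G),
      Dl tr l φ g = Dl T l (fun x => P x * (starRingEnd ℂ) (P x₀)) (T g x₀) := by
    intro l g
    have hcom : ∀ (h : G) (w : G), T (tr h w) x₀ = T h (T w x₀) := by
      intro h w
      rw [tr_apply, add_comm, hact]
    have := Dl_equivariant T (tr (G := G)) id (fun h => T h x₀) hcom l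
      (fun x => P x * (starRingEnd ℂ) (P x₀)) g
    rw [List.map_id] at this
    exact this
  have horb' : ∀ (l : List G), l ≠ [] → ∀ (g : G),
      Dl tr l φ g = Dl T l P (T g x₀) := by
    intro l hl g
    rw [horb l g, Dl_mul_const T hccn l hl]
  refine ⟨φ, ?_, ?_, ?_, ?_⟩
  · intro g
    rw [hφ]
    simp only [norm_mul, RCLike.norm_conj, hPn, mul_one]
  · show P (T 0 x₀) * (starRingEnd ℂ) (P x₀) = 1
    rw [hid x₀]
    rw [Complex.mul_conj, Complex.normSq_eq_norm_sq, hPn]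
    norm_num
  · intro gs g
    have hne : List.ofFn gs ≠ [] := by
      have : (List.ofFn gs).length = i := by simp
      intro h0; rw [h0] at this; simp at this; omega
    rw [horb' _ hne g]
    exact hx₀ gs g
  · intro l hl g
    cases l with
    | nil => simp at hl
    | cons a l' =>
      have hlen' : l'.length = i := by simpa using hl
      subst hlen'
      have hne : (a :: l') ≠ [] := by simp
      rw [horb' _ hne g]
      have hofn : List.ofFn l'.get = l' := List.ofFn_get l'
      have hval : ∀ c : G, Dl T l' P (T c x₀) = lam l'.get := by
        intro c
        have := hx₀ l'.get c
        rwa [hofn] at this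
      have hnl : ‖lam l'.get‖ = 1 := by
        rw [← hval 0]
        exact Dl_norm T l' P hPn _
      rw [Dl_cons, DD_apply]
      rw [show T a (T g x₀) = T (a + g) x₀ from (hact a g x₀).symm]
      rw [hval (a + g), hval g]
      rw [Complex.mul_conj, Complex.normSq_eq_norm_sq, hnl]
      norm_num

end KD

namespace KD

open Complex ComplexConjugate

section Fiber

variable {G : Type*} [AddCommGroup G] (r : ℕ ≃ G)

/-- decoding of an `ℕ`-indexed circle sequence as a function on `G` -/
def dec (u : ℕ → Circle) : G → ℂ := fun g => ((u (r.symm g) : ℂ))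

/-- encoded translation -/
def gtr (h : G) (u : ℕ → Circle) : ℕ → Circle := fun m => u (r.symm (r m + h))

lemma dec_gtr (h : G) (u : ℕ → Circle) : dec r (gtr r h u) = fun g => dec r u (g + h) := by
  funext g
  simp [dec, gtr]

lemma gtr_gtr (h h' : G) (u : ℕ → Circle) : gtr r h (gtr r h' u) = gtr r (h + h') u := by
  funext m
  simp [gtr, add_assoc]

lemma gtr_zero (u : ℕ → Circle) : gtr r 0 u = u := by
  funext m
  simp [gtr]

lemma continuous_gtr (h : G) : Continuous (gtr r h) :=
  continuous_pi fun m => continuous_apply _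

lemma Dl_conj {H X : Type*} (T : H → X → X) :
    ∀ (l : List H) (f : X → ℂ),
      Dl T l (fun x => (starRingEnd ℂ) (f x)) = fun x => (starRingEnd ℂ) (Dl T l f x) := by
  intro l
  induction l with
  | nil => intro f; rfl
  | cons h l ih =>
    intro f
    funext x
    simp only [Dl_cons, DD_apply, ih, map_mul, Complex.conj_conj]

/-- polynomial condition of "degree < i" -/
def pcond (i : ℕ) (u : ℕ → Circle) : Prop :=
  ∀ l : List G, l.length = i → ∀ g : G, Dl tr l (dec r u) g = 1

/-- the compact group of polynomial sequences -/
noncomputable def Gam (i : ℕ) : Subgroup (ℕ → Circle) where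
  carrier := {u | pcond r i u}
  mul_mem' := by
    intro a b ha hb
    intro l hl g
    have hdec : dec r (a * b) = fun g => dec r a g * dec r b g := by
      funext g; simp [dec]
    rw [hdec, Dl_mul]
    show Dl tr l (dec r a) g * Dl tr l (dec r b) g = 1
    rw [ha l hl g, hb l hl g, one_mul]
  one_mem' := by
    intro l hl g
    have hdec : dec r (1 : ℕ → Circle) = fun _ => (1 : ℂ) := by
      funext g; simp [dec]
    rw [hdec, Dl_one]
  inv_mem' := by
    intro a ha l hl g
    have hdec : dec r a⁻¹ = fun g => (starRingEnd ℂ) (dec r a g) := by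
      funext g
      simp only [dec, Pi.inv_apply]
      exact Circle.coe_inv_eq_conj _
    rw [hdec, Dl_conj]
    show (starRingEnd ℂ) (Dl tr l (dec r a) g) = 1
    rw [ha l hl g]
    simp

lemma mem_Gam {i : ℕ} {u : ℕ → Circle} :
    u ∈ Gam r i ↔ ∀ l : List G, l.length = i → ∀ g : G, Dl tr l (dec r u) g = 1 :=
  Iff.rfl

lemma gtr_mem {i : ℕ} (h : G) {u : ℕ → Circle} (hu : u ∈ Gam r i) :
    gtr r h u ∈ Gam r i := by
  intro l hl g
  rw [dec_gtr]
  have hcom : ∀ (a : G) (z : G), (tr a z) + h = tr a (z + h) := by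
    intro a z
    simp only [tr_apply]
    rw [add_right_comm]
  have := Dl_equivariant (tr (G := G)) (tr (G := G)) id (fun z => z + h) hcom l (dec r u) g
  rw [List.map_id] at this
  rw [this]
  exact hu l hl (g + h)

/-- continuity of evaluation of derivatives -/
lemma contDec (l : List G) (g : G) :
    Continuous fun u : ℕ → Circle => Dl tr l (dec r u) g := by
  induction l generalizing g with
  | nil =>
    exact continuous_subtype_val.comp (continuous_apply (r.symm g))
  | cons h l ih =>
    exact ((ih (tr h g)).mul ((ih g).star))

lemma isClosed_Gam (i : ℕ) : IsClosed ((Gam r i : Set (ℕ → Circle))) := by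
  have : ((Gam r i : Set (ℕ → Circle)))
      = ⋂ (l : List G) (_ : l.length = i) (g : G),
          {u : ℕ → Circle | Dl tr l (dec r u) g = 1} := by
    ext u
    simp only [Set.mem_iInter, Set.mem_setOf_eq, SetLike.mem_coe, mem_Gam]
  rw [this]
  exact isClosed_iInter fun l => isClosed_iInter fun _ => isClosed_iInter fun g =>
    isClosed_eq (contDec r l g) continuous_const

lemma compactSpace_Gam (i : ℕ) : CompactSpace ↥(Gam r i) :=
  isCompact_iff_compactSpace.mp (isClosed_Gam r i).isCompact

/-- translation as a `MulEquiv` of the polynomial subgroup -/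
def gtrE (i : ℕ) (h : G) : ↥(Gam r i) ≃* ↥(Gam r i) where
  toFun u := ⟨gtr r h ↑u, gtr_mem r h u.2⟩
  invFun u := ⟨gtr r (-h) ↑u, gtr_mem r (-h) u.2⟩
  left_inv u := by
    ext1
    show gtr r (-h) (gtr r h ↑u) = ↑u
    rw [gtr_gtr, neg_add_cancel, gtr_zero]
  right_inv u := by
    ext1
    show gtr r h (gtr r (-h) ↑u) = ↑u
    rw [gtr_gtr, add_neg_cancel, gtr_zero]
  map_mul' u v := rfl

lemma continuous_gtrE (i : ℕ) (h : G) : Continuous ⇑(gtrE r i h) :=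
  Continuous.subtype_mk ((continuous_gtr r h).comp continuous_subtype_val) _

/-- codes for twisted systems -/
def Code : Type := ℕ × (ℕ → ℕ → Circle)

/-- cocycle associated to a code -/
def ccf (w : ℕ → ℕ → Circle) : G → ℕ → Circle := fun h => w (r.symm h)

/-- validity of a code -/
def valid (c : Code) : Prop :=
  (∀ h : G, ccf r c.2 h ∈ Gam r c.1) ∧
  (∀ h h' : G, ccf r c.2 (h + h') = ccf r c.2 h * gtr r h (ccf r c.2 h'))

lemma valid_zero {c : Code} (hv : valid r c) : ccf r c.2 (0 : G) = 1 := by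
  have h1 := hv.2 0 0
  rw [add_zero, gtr_zero] at h1
  exact (left_eq_mul.mp h1)

/-- the big product group -/
def KP : Type := ∀ c : Code, ↥(Gam r c.1)

noncomputable instance : CommGroup (KP r) := Pi.commGroup

noncomputable instance : TopologicalSpace (KP r) := Pi.topologicalSpace

instance : IsTopologicalGroup (KP r) := Pi.topologicalGroup

open Classical in
/-- the translation part of the fiber action -/
noncomputable def aelt (h : G) : KP r := fun c =>
  if hv : valid r c then ⟨ccf r c.2 h, hv.1 h⟩ else 1

open Classical in
/-- per-coordinate automorphism -/
noncomputable def AutC (h : G) (c : Code) : ↥(Gam r c.1) ≃* ↥(Gam r c.1) :=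
  if valid r c then gtrE r c.1 h else MulEquiv.refl _

/-- the automorphism part of the fiber action -/
noncomputable def AutK (h : G) : (KP r) ≃* (KP r) :=
  MulEquiv.piCongrRight (AutC r h)

lemma continuous_AutC (h : G) (c : Code) : Continuous ⇑(AutC r h c) := by
  by_cases hv : valid r c
  · rw [AutC, if_pos hv]
    exact continuous_gtrE r c.1 h
  · rw [AutC, if_neg hv]
    exact continuous_id

lemma continuous_AutK (h : G) : Continuous ⇑(AutK r h) :=
  continuous_pi fun c => (continuous_AutC r h c).comp (continuous_apply c)

/-- the fiber action -/
noncomputable def Phi (h : G) : KP r → KP r := fun U => aelt r h * (AutK r h) U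

lemma Phi_eq (h : G) : Phi r h = (fun U => aelt r h * U) ∘ ⇑(AutK r h) := rfl

lemma AutC_coe_valid {h : G} {c : Code} (hv : valid r c) (u : ↥(Gam r c.1)) :
    ((AutC r h c u : ℕ → Circle)) = gtr r h ↑u := by
  rw [AutC, if_pos hv]
  rfl

lemma AutC_invalid {h : G} {c : Code} (hv : ¬ valid r c) (u : ↥(Gam r c.1)) :
    AutC r h c u = u := by
  rw [AutC, if_neg hv]
  rfl

lemma Phi_coe_valid {h : G} {c : Code} (hv : valid r c) (U : KP r) :
    (((Phi r h U) c : ℕ → Circle)) = ccf r c.2 h * gtr r h ↑(U c) := by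
  show (((aelt r h c * AutC r h c (U c)) : ↥(Gam r c.1)) : ℕ → Circle) = _
  rw [Submonoid.coe_mul]
  congr 1
  · show ((aelt r h c : ℕ → Circle)) = ccf r c.2 h
    rw [aelt, dif_pos hv]
  · exact AutC_coe_valid r hv (U c)

lemma Phi_invalid {h : G} {c : Code} (hv : ¬ valid r c) (U : KP r) :
    (Phi r h U) c = U c := by
  show aelt r h c * AutC r h c (U c) = U c
  rw [AutC_invalid r hv]
  have : aelt r h c = 1 := by rw [aelt, dif_neg hv]
  rw [this, one_mul]

lemma Phi_zero (U : KP r) : Phi r 0 U = U := by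
  funext c
  by_cases hv : valid r c
  · ext1
    rw [Phi_coe_valid r hv U, valid_zero r hv, gtr_zero, one_mul]
  · exact Phi_invalid r hv U

lemma Phi_add (h h' : G) (U : KP r) : Phi r (h + h') U = Phi r h (Phi r h' U) := by
  funext c
  by_cases hv : valid r c
  · ext1
    rw [Phi_coe_valid r hv, Phi_coe_valid r hv, Phi_coe_valid r hv]
    rw [hv.2 h h']
    rw [mul_assoc]
    congr 1
    have : gtr r h (ccf r c.2 h' * gtr r h' ↑(U c))
        = gtr r h (ccf r c.2 h') * gtr r h (gtr r h' ↑(U c)) := rfl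
    rw [this, gtr_gtr]
  · rw [Phi_invalid r hv, Phi_invalid r hv, Phi_invalid r hv]

/-- the evaluation "polynomial" on a fiber -/
def qGam (i : ℕ) : ↥(Gam r i) → ℂ := fun u => (((u : ℕ → Circle) (r.symm 0) : ℂ))

/-- THE fiber computation: iterated derivatives of the evaluation along a
twisted action are iterated derivatives of `ρ · dec u` on the group. -/
lemma fib_formula (i : ℕ) (ρ : G → Circle) (hρ0 : ρ 0 = 1)
    (Rf : G → ↥(Gam r i) → ↥(Gam r i))
    (hRf : ∀ (h : G) (u : ↥(Gam r i)),
      ((Rf h u : ℕ → Circle)) = (fun m => ρ (r m + h) * (ρ (r m))⁻¹) * gtr r h ↑u) :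
    ∀ (l : List G) (u : ↥(Gam r i)),
      Dl Rf l (qGam r i) u = Dl tr l (fun g => ((ρ g : ℂ)) * dec r ↑u g) 0 := by
  intro l
  induction l with
  | nil =>
    intro u
    show qGam r i u = ((ρ 0 : ℂ)) * dec r ↑u 0
    rw [hρ0]
    simp [qGam, dec]
  | cons h l ih =>
    intro u
    show Dl Rf l (qGam r i) (Rf h u) * (starRingEnd ℂ) (Dl Rf l (qGam r i) u) = _
    rw [ih (Rf h u), ih u]
    have hkey : (fun g => ((ρ g : ℂ)) * dec r ↑(Rf h u) g)
        = fun g => ((ρ (g + h) : ℂ)) * dec r ↑u (g + h) := by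
      funext g
      have h1 : dec r ↑(Rf h u) g
          = ((ρ (g + h) : ℂ)) * (((ρ g : ℂ)))⁻¹ * dec r ↑u (g + h) := by
        rw [dec, hRf h u]
        simp only [Pi.mul_apply]
        push_cast
        simp only [Equiv.apply_symm_apply]
        congr 1
        show ((gtr r h ↑u (r.symm g) : ℂ)) = dec r (↑u) (g + h)
        rw [gtr, dec]
        simp only [Equiv.apply_symm_apply]
      rw [h1]
      have hne : ((ρ g : ℂ)) ≠ 0 := Circle.coe_ne_zero _
      field_simp
    rw [hkey]
    have hcom : ∀ (a : G) (z : G), (tr a z) + h = tr a (z + h) := by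
      intro a z
      simp only [tr_apply]
      rw [add_right_comm]
    have htrans := Dl_equivariant (tr (G := G)) (tr (G := G)) id (fun z => z + h) hcom l
      (fun g => ((ρ g : ℂ)) * dec r ↑u g) 0
    rw [List.map_id] at htrans
    rw [htrans]
    show _ = Dl tr (h :: l) (fun g => ((ρ g : ℂ)) * dec r ↑u g) 0
    rw [Dl_cons, DD_apply, tr_apply, zero_add]

end Fiber

end KD

open KD

/-- Every ergodic system over a countable torsion-free abelian group admits an
extension in which its spectra up to order `k - 1` acquire all `n`-th roots:
`X` is `k`-divisible in `Y`. -/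
theorem exists_extension_kDivisible_in
    {G : Type*} [AddCommGroup G] [Countable G]
    (htf : ∀ (g : G) (n : ℕ), 0 < n → n • g = 0 → g = 0)
    (k : ℕ) (hk : 2 ≤ k)
    {X : Type u} [MeasurableSpace X] (μ : Measure X) [IsProbabilityMeasure μ]
    (T : G → X → X) (hT : ∀ g, MeasurePreserving (T g) μ μ)
    (hid : ∀ x, T 0 x = x)
    (hact : ∀ g g' x, T (g + g') x = T g (T g' x))
    (herg : ∀ A : Set X, MeasurableSet A →
      (∀ g, μ (symmDiff (T g ⁻¹' A) A) = 0) → μ A = 0 ∨ μ A = 1) :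
    ∃ (Y : Type u) (_ : MeasurableSpace Y) (ν : Measure Y) (S : G → Y → Y) (π : Y → X),
      IsProbabilityMeasure ν ∧
      (∀ g, MeasurePreserving (S g) ν ν) ∧
      (∀ y, S 0 y = y) ∧
      (∀ g g' y, S (g + g') y = S g (S g' y)) ∧
      Measurable π ∧ Measure.map π ν = μ ∧
      (∀ g, ∀ᵐ y ∂ν, π (S g y) = T g (π y)) ∧
      ∀ i : ℕ, 1 ≤ i → i ≤ k - 1 → ∀ lam : (Fin i → G) → ℂ, InSpec T μ i lam →
        ∀ n : ℕ, 1 ≤ n →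
          ∃ Q : Y → ℂ, IsPhasePoly S ν (i + 1) Q ∧
            ∀ gs : Fin i → G,
              (fun y => ((List.ofFn gs).foldr (DD S) Q) y ^ n) =ᵐ[ν] fun _ => lam gs := by
  classical
  haveI : (MeasureTheory.ae μ).NeBot := ae_neBot.mpr (IsProbabilityMeasure.ne_zero μ)
  rcases finite_or_infinite G with hfin | hinf
  · -- trivial group case
    have hsub : ∀ g : G, g = 0 := by
      intro g
      exact htf g (Nat.card G) Nat.card_pos card_nsmul_eq_zero'
    refine ⟨X, inferInstance, μ, T, id, inferInstance, hT, hid, hact, measurable_id,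
      Measure.map_id, fun g => Filter.Eventually.of_forall (fun y => rfl), ?_⟩
    intro i hi1 _ lam hspec n hn
    obtain ⟨P, hpoly, hP⟩ := hspec
    have hone : ∀ gs : Fin i → G, lam gs = 1 := by
      intro gs
      have h1 : ∀ x, Dl T (List.ofFn gs) P x = 1 := by
        have hlen : (List.ofFn gs).length = i := by simp
        intro x
        rcases hl : List.ofFn gs with _ | ⟨a, l'⟩
        · rw [hl] at hlen; simp at hlen; omega
        · rw [Dl_cons, DD_apply]
          rw [show a = 0 from hsub a, hid x]
          rw [Complex.mul_conj, Complex.normSq_eq_norm_sq]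
          rw [Dl_norm T l' P hpoly.2.1 x]
          norm_num
      have h2 : (fun _ : X => (1:ℂ)) =ᵐ[μ] fun _ => lam gs := by
        filter_upwards [hP gs] with x hx
        rw [← hx]
        exact (h1 x).symm
      obtain ⟨x, hx⟩ := h2.exists
      exact hx.symm
    refine ⟨fun _ => 1, ⟨measurable_const, fun x => by simp, ?_⟩, ?_⟩
    · intro l hl
      refine Filter.Eventually.of_forall (fun x => ?_)
      show Dl T l (fun _ => (1:ℂ)) x = 1
      rw [Dl_one]
    · intro gs
      refine Filter.Eventually.of_forall (fun x => ?_)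
      show (Dl T (List.ofFn gs) (fun _ => (1:ℂ)) x) ^ n = lam gs
      rw [Dl_one, hone gs]
      simp
  · -- infinite case
    obtain ⟨dnm⟩ := nonempty_denumerable G
    set r : ℕ ≃ G := (Denumerable.eqv G).symm with hrdef
    haveI hGamCS : ∀ c : Code, CompactSpace ↥(Gam r c.1) := fun c => compactSpace_Gam r c.1
    haveI hKcs : CompactSpace (KP r) := by
      show CompactSpace (∀ c : Code, ↥(Gam r c.1)); infer_instance
    haveI hKt2 : T2Space (KP r) := by
      show T2Space (∀ c : Code, ↥(Gam r c.1)); infer_instance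
    haveI hKne : Nonempty (KP r) := ⟨1⟩
    letI : MeasurableSpace (KP r) := borel (KP r)
    haveI : BorelSpace (KP r) := ⟨rfl⟩
    set K₀ : TopologicalSpace.PositiveCompacts (KP r) := ⊤ with hK₀
    set haarK : Measure (KP r) := MeasureTheory.Measure.haarMeasure K₀ with hhaarK
    haveI : IsProbabilityMeasure haarK := by
      constructor
      rw [hhaarK]
      rw [show (Set.univ : Set (KP r)) = ↑K₀ from (TopologicalSpace.PositiveCompacts.coe_top).symm]
      exact Measure.haarMeasure_self
    have hPhiMP : ∀ h : G, MeasurePreserving (Phi r h) haarK haarK := by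
      intro h
      have hcont : Continuous ⇑(AutK r h).toMonoidHom := continuous_AutK r h
      have hsurj : Function.Surjective ⇑(AutK r h).toMonoidHom := (AutK r h).surjective
      have hA : MeasurePreserving (⇑(AutK r h)) haarK haarK :=
        MonoidHom.measurePreserving (f := (AutK r h).toMonoidHom) hcont hsurj rfl
      have htr : MeasurePreserving (fun U => aelt r h * U) haarK haarK :=
        measurePreserving_mul_left haarK (aelt r h)
      have := htr.comp hA
      rwa [← Phi_eq r h] at this
    set e : ULift.{u} (KP r) ≃ᵐ KP r := MeasurableEquiv.ulift with hedef
    set νK : Measure (ULift.{u} (KP r)) := Measure.map e.symm haarK with hνK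
    have hup : MeasurePreserving ⇑e νK haarK := by
      refine ⟨e.measurable, ?_⟩
      rw [hνK, Measure.map_map e.measurable e.symm.measurable, e.self_comp_symm,
        Measure.map_id]
    have hdown : MeasurePreserving ⇑e.symm haarK νK := ⟨e.symm.measurable, rfl⟩
    haveI : IsProbabilityMeasure νK := by
      rw [hνK]; exact Measure.isProbabilityMeasure_map (e.symm.measurable.aemeasurable)
    set SU : G → ULift.{u} (KP r) → ULift.{u} (KP r) := fun g z => e.symm (Phi r g (e z))
      with hSUdef
    have hSU : ∀ g, MeasurePreserving (SU g) νK νK :=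
      fun g => (hdown.comp ((hPhiMP g).comp hup))
    set ν : Measure (X × ULift.{u} (KP r)) := μ.prod νK with hν
    set S : G → X × ULift.{u} (KP r) → X × ULift.{u} (KP r) :=
      fun g y => (T g y.1, SU g y.2) with hS
    refine ⟨X × ULift.{u} (KP r), inferInstance, ν, S, Prod.fst, inferInstance,
      ?_, ?_, ?_, measurable_fst, ?_, ?_, ?_⟩
    · intro g
      exact ((hT g).prod (hSU g))
    · intro y
      show (T 0 y.1, SU 0 y.2) = y
      rw [hid]
      have h2 : SU 0 y.2 = y.2 := by
        rw [hSUdef]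
        simp only
        rw [Phi_zero]
        exact e.symm_apply_apply y.2
      rw [h2]
    · intro g g' y
      show (T (g + g') y.1, SU (g + g') y.2) = (T g (T g' y.1), SU g (SU g' y.2))
      rw [hact]
      have h2 : SU (g + g') y.2 = SU g (SU g' y.2) := by
        rw [hSUdef]
        simp only
        rw [e.apply_symm_apply, Phi_add]
      rw [h2]
    · rw [hν, Measure.map_fst_prod]
      simp [measure_univ]
    · intro g
      exact Filter.Eventually.of_forall (fun y => rfl)
    · -- spectral divisibility
      intro i hi1 _ lam hspec n hn
      obtain ⟨φ, hφn, hφ0, hφt, hφk⟩ := extract μ T hT hid hact i hi1 lam hspec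
      obtain ⟨ρ, hρ0, hρk, hρpow⟩ := root_exists htf i n hn φ hφn hφ0 hφk
      set w₀ : ℕ → ℕ → Circle := fun a m => ρ (r m + r a) * (ρ (r m))⁻¹ with hw₀
      set c₀ : Code := (i, w₀) with hc₀
      have hccf : ∀ h : G, ccf r w₀ h = fun m => ρ (r m + h) * (ρ (r m))⁻¹ := by
        intro h; funext m
        show w₀ (r.symm h) m = _
        rw [hw₀]
        simp only [Equiv.apply_symm_apply]
      have hmemc : ∀ h : G, ccf r w₀ h ∈ Gam r i := by
        intro h l hl g
        have hdec : dec r (ccf r w₀ h) = DD tr h (fun x => ((ρ x : ℂ))) := by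
          funext g
          rw [hccf]
          show ((((ρ (r (r.symm g) + h) * (ρ (r (r.symm g)))⁻¹) : Circle)) : ℂ) = _
          rw [DD_apply, tr_apply]
          push_cast
          simp only [Equiv.apply_symm_apply]
          rw [← Circle.coe_inv_eq_conj]
          push_cast
          ring
        rw [hdec, Dl_DD_comm]
        show Dl tr (h :: l) (fun x => ((ρ x : ℂ))) g = 1
        exact hρk (h :: l) (by simp [hl]) g
      have hval : valid r c₀ := by
        constructor
        · exact hmemc
        · intro h h'
          funext m
          refine Circle.ext ?_
          have h1 : ccf r (c₀.2) (h + h') m = ((ρ (r m + (h + h')) * (ρ (r m))⁻¹ : Circle)) := by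
            rw [show c₀.2 = w₀ from rfl, hccf]
          have h2 : (ccf r c₀.2 h * gtr r h (ccf r c₀.2 h')) m
              = ((ρ (r m + h) * (ρ (r m))⁻¹ : Circle))
                * ((ρ ((r m + h) + h') * (ρ (r m + h))⁻¹ : Circle)) := by
            show ccf r c₀.2 h m * gtr r h (ccf r c₀.2 h') m = _
            rw [show c₀.2 = w₀ from rfl, hccf]
            congr 1
            show ccf r w₀ h' (r.symm (r m + h)) = _
            rw [hccf]
            simp only [Equiv.apply_symm_apply]
          rw [h1, h2]
          push_cast
          rw [← add_assoc]
          have hne1 : ((ρ (r m) : ℂ)) ≠ 0 := Circle.coe_ne_zero _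
          have hne2 : ((ρ (r m + h) : ℂ)) ≠ 0 := Circle.coe_ne_zero _
          field_simp
      set Rfib : G → ↥(Gam r i) → ↥(Gam r i) :=
        fun h u => ⟨ccf r w₀ h * gtr r h ↑u, mul_mem (hmemc h) (gtr_mem r h u.2)⟩ with hRfib
      set proj : (X × ULift.{u} (KP r)) → ↥(Gam r i) := fun y => (e y.2) c₀ with hproj_def
      have hproj : ∀ (h : G) (y : X × ULift.{u} (KP r)), proj (S h y) = Rfib h (proj y) := by
        intro h y
        show (e (SU h y.2)) c₀ = Rfib h ((e y.2) c₀)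
        rw [hSUdef]
        simp only
        rw [e.apply_symm_apply]
        ext1
        rw [Phi_coe_valid r hval]
      set Q : (X × ULift.{u} (KP r)) → ℂ := fun y => qGam r i (proj y) with hQdef
      have hform : ∀ (l : List G) (y : X × ULift.{u} (KP r)),
          Dl S l Q y = Dl tr l (fun g => ((ρ g : ℂ)) * dec r ↑(proj y) g) 0 := by
        intro l y
        have h1 := Dl_equivariant Rfib S id proj (fun h y => hproj h y) l (qGam r i) y
        rw [List.map_id] at h1
        have h2 : Dl S l Q y = Dl Rfib l (qGam r i) (proj y) := h1
        rw [h2]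
        refine fib_formula r i ρ hρ0 Rfib ?_ l (proj y)
        intro h u
        show (((ccf r w₀ h * gtr r h ↑u : ℕ → Circle))) = _
        rw [hccf]
      have hpc : ∀ (y : X × ULift.{u} (KP r)) (l : List G), l.length = i →
          Dl tr l (dec r ↑(proj y)) 0 = 1 := fun y l hl => (proj y).2 l hl 0
      have hpc1 : ∀ (y : X × ULift.{u} (KP r)) (l : List G), l.length = i + 1 →
          Dl tr l (dec r ↑(proj y)) 0 = 1 := by
        intro y l hl
        rcases l with _ | ⟨a, l'⟩
        · simp at hl
        · have hl' : l'.length = i := by simpa using hl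
          rw [Dl_cons, DD_apply, (proj y).2 l' hl' _, (proj y).2 l' hl' _]
          simp
      have hQsplit : ∀ (l : List G) (y : X × ULift.{u} (KP r)), Dl S l Q y
          = Dl tr l (fun x => ((ρ x : ℂ))) 0 * Dl tr l (dec r ↑(proj y)) 0 := by
        intro l y
        rw [hform l y]
        rw [show (fun g => ((ρ g : ℂ)) * dec r (↑(proj y)) g)
          = fun g => (fun x => ((ρ x : ℂ))) g * (dec r ↑(proj y)) g from rfl]
        rw [Dl_mul]
      have hQm : Measurable Q := by
        have hc : Continuous (fun U : KP r => qGam r i (U c₀)) := by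
          exact continuous_subtype_val.comp ((continuous_apply (r.symm 0)).comp
            (continuous_subtype_val.comp (continuous_apply c₀)))
        exact (hc.measurable).comp (e.measurable.comp measurable_snd)
      refine ⟨Q, ⟨hQm, fun y => circle_norm _, ?_⟩, ?_⟩
      · intro l hl
        refine Filter.Eventually.of_forall (fun y => ?_)
        show Dl S l Q y = 1
        rw [hQsplit l y, hρk l hl 0, hpc1 y l hl, one_mul]
      · intro gs
        refine Filter.Eventually.of_forall (fun y => ?_)
        show (Dl S (List.ofFn gs) Q y) ^ n = lam gs
        rw [hQsplit _ y, hpc y _ (by simp), mul_one]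
        have hfn : (fun x => ((ρ x : ℂ)) ^ n) = φ := funext hρpow
        calc (Dl tr (List.ofFn gs) (fun x => ((ρ x : ℂ))) 0) ^ n
            = Dl tr (List.ofFn gs) (fun x => ((ρ x : ℂ)) ^ n) 0 := by rw [Dl_pow]
          _ = lam gs := by rw [hfn]; exact hφt gs 0
end

section
/- Let Z be an abelian group and let U be a divisible abelian group, and let k : Z × Z → U be a symmetric 2-cocycle, i.e. k(r+s, t) + k(r, s) = k(r, s+t) + k(s, t) and k(s, t) = k(t, s) for all r, s, t ∈ Z. Then there exists a function φ : Z → U such that k(s, t) = φ(s+t) − φ(s) − φ(t) for all s, t ∈ Z. -/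
/-- Wrapper type for the twisted extension of `Z` by `U` along a cocycle. -/
structure TwExt (U Z : Type*) where
  u : U
  z : Z

/-- Twisted addition. -/
def twAdd {Z U : Type*} [AddCommGroup Z] [AddCommGroup U] (k : Z → Z → U)
    (a b : TwExt U Z) : TwExt U Z :=
  ⟨a.u + b.u + k a.z b.z, a.z + b.z⟩

/-- Twisted zero. -/
def twZero {Z U : Type*} [AddCommGroup Z] [AddCommGroup U] (k : Z → Z → U) : TwExt U Z :=
  ⟨-k 0 0, 0⟩

/-- Twisted negation. -/
def twNeg {Z U : Type*} [AddCommGroup Z] [AddCommGroup U] (k : Z → Z → U)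
    (a : TwExt U Z) : TwExt U Z :=
  ⟨-a.u - k a.z (-a.z) - k 0 0, -a.z⟩

/-- A symmetric 2-cocycle on an abelian group `Z` with values in a divisible
abelian group `U` is a coboundary: `k(s,t) = φ(s+t) - φ(s) - φ(t)`. -/
theorem symmetric_cocycle_splits
    {Z U : Type*} [AddCommGroup Z] [AddCommGroup U]
    (hdiv : ∀ (u : U) (n : ℕ), 1 ≤ n → ∃ v : U, n • v = u)
    (k : Z → Z → U)
    (hcoc : ∀ r s t : Z, k (r + s) t + k r s = k r (s + t) + k s t)
    (hsym : ∀ s t : Z, k s t = k t s) :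
    ∃ φ : Z → U, ∀ s t : Z, k s t = φ (s + t) - φ s - φ t := by
  -- k z 0 = k 0 0 for every z
  have hk0 : ∀ z : Z, k z 0 = k 0 0 := by
    intro z
    have := hcoc z 0 0
    simpa using this
  have h0k : ∀ z : Z, k 0 z = k 0 0 := fun z => (hsym 0 z).trans (hk0 z)
  -- divisibility instances
  letI : DivisibleBy U ℕ :=
    { div := fun u n => if h : n = 0 then 0 else (hdiv u n (Nat.one_le_iff_ne_zero.mpr h)).choose
      div_zero := fun a => by simp
      div_cancel := fun {n} a hn => by
        simp only [dif_neg hn]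
        exact (hdiv a n (Nat.one_le_iff_ne_zero.mpr hn)).choose_spec }
  letI : DivisibleBy U ℤ := AddGroup.divisibleByIntOfDivisibleByNat U
  have hBaer : Module.Baer ℤ U := Module.Baer.of_divisible U
  -- the twisted extension
  letI : Add (TwExt U Z) := ⟨twAdd k⟩
  letI : Zero (TwExt U Z) := ⟨twZero k⟩
  letI : Neg (TwExt U Z) := ⟨twNeg k⟩
  letI : AddCommGroup (TwExt U Z) :=
    { add := (· + ·)
      zero := 0
      neg := (- ·)
      nsmul := nsmulRec
      zsmul := zsmulRec
      add_assoc := fun a b c => by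
        show twAdd k (twAdd k a b) c = twAdd k a (twAdd k b c)
        have h := hcoc a.z b.z c.z
        simp only [twAdd, TwExt.mk.injEq]
        constructor
        · rw [show a.u + b.u + k a.z b.z + c.u + k (a.z + b.z) c.z
              = a.u + (b.u + c.u) + (k (a.z + b.z) c.z + k a.z b.z) by abel, h]
          abel
        · exact add_assoc _ _ _
      zero_add := fun a => by
        show twAdd k (twZero k) a = a
        simp only [twAdd, twZero]
        cases a with
        | mk au az =>
          simp only [TwExt.mk.injEq]
          constructor
          · rw [h0k az]; abel
          · exact zero_add az
      add_zero := fun a => by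
        show twAdd k a (twZero k) = a
        simp only [twAdd, twZero]
        cases a with
        | mk au az =>
          simp only [TwExt.mk.injEq]
          constructor
          · rw [hk0 az]; abel
          · exact add_zero az
      neg_add_cancel := fun a => by
        show twAdd k (twNeg k a) a = twZero k
        simp only [twAdd, twNeg, twZero, TwExt.mk.injEq]
        constructor
        · rw [hsym (-a.z) a.z]; abel
        · exact neg_add_cancel a.z
      add_comm := fun a b => by
        show twAdd k a b = twAdd k b a
        simp only [twAdd, TwExt.mk.injEq]
        constructor
        · rw [hsym a.z b.z]; abel
        · exact add_comm a.z b.z }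
  -- the inclusion U →+ TwExt U Z
  let ι : U →+ TwExt U Z :=
    { toFun := fun u => ⟨u - k 0 0, 0⟩
      map_zero' := by
        show TwExt.mk (0 - k 0 0) 0 = twZero k
        simp only [twZero, TwExt.mk.injEq]
        exact ⟨by abel, trivial⟩
      map_add' := fun x y => by
        show TwExt.mk (x + y - k 0 0) 0 = twAdd k ⟨x - k 0 0, 0⟩ ⟨y - k 0 0, 0⟩
        simp only [twAdd, TwExt.mk.injEq]
        constructor
        · rw [h0k 0]; abel
        · exact (add_zero (0 : Z)).symm }
  have hι : Function.Injective ι := by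
    intro x y hxy
    have h : x - k 0 0 = y - k 0 0 := congrArg TwExt.u hxy
    exact sub_left_inj.mp h
  obtain ⟨r, hr⟩ := hBaer.extension_property_addMonoidHom ι hι (AddMonoidHom.id U)
  -- the set-theoretic section
  refine ⟨fun z => -r ⟨0, z⟩, fun s t => ?_⟩
  have hσ : (⟨0, s⟩ + ⟨0, t⟩ : TwExt U Z) = ι (k s t) + ⟨0, s + t⟩ := by
    show twAdd k ⟨0, s⟩ ⟨0, t⟩ = twAdd k ⟨k s t - k 0 0, 0⟩ ⟨0, s + t⟩
    simp only [twAdd, TwExt.mk.injEq]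
    constructor
    · rw [h0k (s + t)]; abel
    · exact (zero_add (s + t)).symm
  have h1 := congrArg r hσ
  rw [map_add, map_add] at h1
  have hrι : r (ι (k s t)) = k s t := DFunLike.congr_fun hr (k s t)
  rw [hrι] at h1
  have h2 : k s t = r ⟨0, s⟩ + r ⟨0, t⟩ - r ⟨0, s + t⟩ := by
    rw [eq_sub_iff_add_eq]
    exact h1.symm
  rw [h2]
  simp only [sub_neg_eq_add]
  abel
end

section
/- Let a, b ∈ ℤ be coprime and let U be an abelian group (written multiplicatively) which is a-divisible, b-divisible, (a+b)-divisible and (b−a)-divisible. Then the two subsets of U⁴ given by A = {(g, g·g₁^a·g₂^{a(a−1)/2}, g·g₁^b·g₂^{b(b−1)/2}, g·g₁^{a+b}·g₂^{(a+b)(a+b−1)/2}) : g, g₁, g₂ ∈ U} and B = {(u^{a+b}, t·u^{b−a}, t·v^{b−a}, v^{a+b}) : u, t, v ∈ U} are equal. -/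
private lemma two_dvd_mul_pred (a : ℤ) : 2 * (a * (a - 1) / 2) = a * (a - 1) := by
  have h : (2 : ℤ) ∣ a * (a - 1) := by
    rcases Int.even_or_odd a with h | h
    · exact Dvd.dvd.mul_right h.two_dvd _
    · obtain ⟨k, hk⟩ := h
      exact Dvd.dvd.mul_left (⟨k, by omega⟩ : (2:ℤ) ∣ a - 1) _
  exact Int.mul_ediv_cancel' h

/-- The computation used in the Khintchine recurrence: for coprime `a, b ∈ ℤ` and
an abelian group `U` which is `a`, `b`, `(a+b)` and `(b-a)`-divisible, the sets
`A = {(g, g g₁^a g₂^C(a,2), g g₁^b g₂^C(b,2), g g₁^{a+b} g₂^C(a+b,2))}` and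
`B = {(u^{a+b}, t u^{b-a}, t v^{b-a}, v^{a+b})}` coincide. -/
theorem computation_sets_eq
    {U : Type*} [CommGroup U] (a b : ℤ) (hco : IsCoprime a b)
    (hda : ∀ u : U, ∃ w : U, w ^ a = u)
    (hdb : ∀ u : U, ∃ w : U, w ^ b = u)
    (hdab : ∀ u : U, ∃ w : U, w ^ (a + b) = u)
    (hdba : ∀ u : U, ∃ w : U, w ^ (b - a) = u) :
    {p : U × U × U × U | ∃ g g₁ g₂ : U,
        p = (g, g * g₁ ^ a * g₂ ^ (a * (a - 1) / 2),
              g * g₁ ^ b * g₂ ^ (b * (b - 1) / 2),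
              g * g₁ ^ (a + b) * g₂ ^ ((a + b) * (a + b - 1) / 2))} =
    {p : U × U × U × U | ∃ u t v : U,
        p = (u ^ (a + b), t * u ^ (b - a), t * v ^ (b - a), v ^ (a + b))} := by
  set c : ℤ := a * (a - 1) / 2 with hc
  set d : ℤ := b * (b - 1) / 2 with hd
  set e : ℤ := (a + b) * (a + b - 1) / 2 with he
  have h2c : 2 * c = a * (a - 1) := two_dvd_mul_pred a
  have h2d : 2 * d = b * (b - 1) := two_dvd_mul_pred b
  have h2e : 2 * e = (a + b) * (a + b - 1) := two_dvd_mul_pred (a + b)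
  ext p
  simp only [Set.mem_setOf_eq]
  constructor
  · rintro ⟨g, g₁, g₂, rfl⟩
    obtain ⟨s, hs⟩ := hdab g
    obtain ⟨f, hf⟩ := hdab g₂
    have key : (a + b) * d = (a + b) * c + e * (b - a) := by
      have h2 : 2 * ((a + b) * d) = 2 * ((a + b) * c + e * (b - a)) := by
        calc 2 * ((a + b) * d) = (a + b) * (2 * d) := by ring
        _ = (a + b) * (b * (b - 1)) := by rw [h2d]
        _ = (a + b) * (a * (a - 1)) + ((a + b) * (a + b - 1)) * (b - a) := by ring
        _ = (a + b) * (2 * c) + (2 * e) * (b - a) := by rw [h2c, h2e]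
        _ = 2 * ((a + b) * c + e * (b - a)) := by ring
      omega
    refine ⟨s, g * g₁ ^ a * g₂ ^ c * s ^ (a - b), s * (g₁ * f ^ e), ?_⟩
    simp only [Prod.mk.injEq]
    refine ⟨hs.symm, ?_, ?_, ?_⟩
    · apply Additive.ofMul.injective
      simp only [ofMul_mul, ofMul_zpow, ofMul_inv]
      module
    · rw [← hs, ← hf, ← zpow_mul, ← zpow_mul, key]
      apply Additive.ofMul.injective
      simp only [ofMul_mul, ofMul_zpow, ofMul_inv]
      module
    · rw [← hs, ← hf, ← zpow_mul]
      apply Additive.ofMul.injective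
      simp only [ofMul_mul, ofMul_zpow, ofMul_inv]
      module
  · rintro ⟨u, t, v, rfl⟩
    obtain ⟨h₁, hh₁⟩ := hda ((u * v) ^ a * t⁻¹)
    obtain ⟨h, hh₂⟩ := hdb h₁
    have hh : h ^ (a * b) = (u * v) ^ a * t⁻¹ := by
      rw [mul_comm a b, zpow_mul, hh₂, hh₁]
    have ht : t = (u * v) ^ a * (h ^ (a * b))⁻¹ := by
      rw [hh, mul_inv_rev, inv_inv, mul_comm ((u * v) ^ a) (t * ((u * v) ^ a)⁻¹),
        mul_assoc, inv_mul_cancel, mul_one]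
    refine ⟨u ^ (a + b), u⁻¹ * v * h ^ (1 - a - b), h ^ (2 : ℤ), ?_⟩
    simp only [Prod.mk.injEq]
    refine ⟨trivial, ?_, ?_, ?_⟩
    · rw [← zpow_mul, show (2:ℤ) * c = a * (a - 1) from h2c, ht]
      apply Additive.ofMul.injective
      simp only [ofMul_mul, ofMul_zpow, ofMul_inv]
      module
    · rw [← zpow_mul, show (2:ℤ) * d = b * (b - 1) from h2d, ht]
      apply Additive.ofMul.injective
      simp only [ofMul_mul, ofMul_zpow, ofMul_inv]
      module
    · rw [← zpow_mul, show (2:ℤ) * e = (a + b) * (a + b - 1) from h2e]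
      apply Additive.ofMul.injective
      simp only [ofMul_mul, ofMul_zpow, ofMul_inv]
      module
end

section
/- Let α be an irrational real number and consider the rotation x ↦ x + α on ℝ/ℤ with Lebesgue (Haar) measure. Define ρ : ℝ/ℤ → {−1, 1} by ρ(x) = e(−α/2 + {x+α}/2 − {x}/2), where {t} denotes the fractional part of (a representative of) t and e(y) = e^{2πiy}; ρ indeed takes values in {−1, 1}. Then there is no constant c ∈ {−1, 1} and measurable map F : ℝ/ℤ → {−1, 1} such that ρ(x) = c · F(x+α) · F(x)^{-1} for Lebesgue-almost every x. -/
open MeasureTheory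

/-- The fractional part of a point of `ℝ/ℤ`: its representative in `[0, 1)`. -/
noncomputable def fract1 (x : AddCircle (1 : ℝ)) : ℝ :=
  (AddCircle.equivIco 1 0 x : ℝ)

/-- The cocycle `ρ(x) = e(-α/2 + {x+α}/2 - {x}/2)` over the rotation by `α`
on `ℝ/ℤ`; it takes values in `{-1, 1}`. -/
noncomputable def rho (α : ℝ) (x : AddCircle (1 : ℝ)) : ℂ :=
  Complex.exp (2 * Real.pi * Complex.I *
    ((-α / 2 + fract1 (x + (α : AddCircle (1 : ℝ))) / 2 - fract1 x / 2 : ℝ) : ℂ))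


noncomputable def expc (t : ℝ) : ℂ := Complex.exp (2 * Real.pi * Complex.I * (t : ℂ))

lemma expc_add (s t : ℝ) : expc (s + t) = expc s * expc t := by
  rw [expc, expc, expc, ← Complex.exp_add]; push_cast; ring_nf

lemma expc_int (n : ℤ) : expc (n : ℝ) = 1 := by
  rw [expc]
  have := Complex.exp_int_mul_two_pi_mul_I n
  rw [← this]; congr 1; push_cast; ring

lemma norm_expc (t : ℝ) : ‖expc t‖ = 1 := by
  rw [expc, Complex.norm_exp]
  simp

lemma fract1_coe (r : ℝ) : fract1 (r : AddCircle (1 : ℝ)) = Int.fract r := by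
  rw [fract1, AddCircle.coe_equivIco_mk_apply]
  simp

lemma fract1_sub_int (α : ℝ) (x : AddCircle (1 : ℝ)) :
    ∃ n : ℤ, fract1 (x + (α : AddCircle (1 : ℝ))) - fract1 x - α = n := by
  induction x using QuotientAddGroup.induction_on with
  | H r =>
    have : ((r : AddCircle (1:ℝ)) + (α : AddCircle (1:ℝ))) = ((r + α : ℝ) : AddCircle (1:ℝ)) := by
      norm_cast
    rw [this, fract1_coe, fract1_coe]
    refine ⟨⌊r⌋ - ⌊r + α⌋, ?_⟩
    rw [Int.fract, Int.fract]
    push_cast; ring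

lemma measurable_fract1 : Measurable fract1 := by
  have h : Measurable (AddCircle.measurableEquivIco (T := (1:ℝ)) 0) :=
    (AddCircle.measurableEquivIco (T := (1:ℝ)) 0).measurable
  exact measurable_subtype_coe.comp h

lemma fourier_add_apply' (m : ℤ) (x y : AddCircle (1:ℝ)) :
    fourier m (x + y) = fourier m x * fourier m y := by
  simp only [fourier_apply, smul_add, AddCircle.toCircle_add, Circle.coe_mul]

lemma fourier_neg_neg' (n : ℤ) (x : AddCircle (1:ℝ)) : fourier (-n) (-x) = fourier n x := by
  rw [fourier_apply, fourier_apply]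
  congr 1
  simp
  rfl

lemma rho_eq (α : ℝ) (x : AddCircle (1:ℝ)) :
    rho α x = expc (-α/2 + fract1 (x + (α : AddCircle (1:ℝ)))/2 - fract1 x/2) := rfl

/-- For the irrational rotation by `α` on `ℝ/ℤ`, the `{-1,1}`-valued cocycle
`ρ(x) = e(-α/2 + {x+α}/2 - {x}/2)` is not equal (a.e.) to a constant in `{-1,1}`
times a `{-1,1}`-valued coboundary. -/
theorem rho_not_C2_cohomologous_to_constant (α : ℝ) (hα : Irrational α) :
    ¬ ∃ (c : ℂ) (F : AddCircle (1 : ℝ) → ℂ),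
        (c = 1 ∨ c = -1) ∧ Measurable F ∧ (∀ x, F x = 1 ∨ F x = -1) ∧
        ∀ᵐ x : AddCircle (1 : ℝ),
          rho α x = c * (F (x + (α : AddCircle (1 : ℝ))) * (F x)⁻¹) := by
  haveI : Fact (0 < (1:ℝ)) := ⟨one_pos⟩
  rintro ⟨c, F, hc, hFm, hF1, hae⟩
  have hc2 : c * c = 1 := by rcases hc with h | h <;> simp [h]
  have hFsq : ∀ x, F x * F x = 1 := fun x => by rcases hF1 x with h | h <;> simp [h]
  have hFinv : ∀ x, (F x)⁻¹ = F x := fun x => by rcases hF1 x with h | h <;> simp [h, inv_neg]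
  have hFnorm : ∀ x, ‖F x‖ = 1 := fun x => by rcases hF1 x with h | h <;> simp [h]
  set μ : Measure (AddCircle (1:ℝ)) := AddCircle.haarAddCircle with hμ
  have hvol : (volume : Measure (AddCircle (1:ℝ))) = μ := by
    rw [hμ, AddCircle.volume_eq_smul_haarAddCircle]; simp
  set H : AddCircle (1:ℝ) → ℂ := fun x => expc (fract1 x / 2) * F x with hH
  set lam : ℂ := c * expc (α/2) with hlam
  -- the eigenfunction equation
  have heig : ∀ᵐ x ∂μ, H (x + (α : AddCircle (1:ℝ))) = lam * H x := by
    rw [← hvol]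
    filter_upwards [hae] with x hx
    obtain ⟨n, hn⟩ := fract1_sub_int α x
    have hF' : F (x + (α : AddCircle (1:ℝ))) = c * rho α x * F x := by
      have h0 : c * (c * (F (x + (α : AddCircle (1:ℝ))) * F x)) * F x
          = (c*c) * (F (x + (α : AddCircle (1:ℝ)))) * (F x * F x) := by ring
      rw [hx, hFinv, h0, hc2, hFsq]; ring
    have key : expc (fract1 (x + (α : AddCircle (1:ℝ)))/2) * rho α x
        = expc (α/2) * expc (fract1 x/2) := by
      rw [rho_eq, ← expc_add, ← expc_add]
      have harg : fract1 (x + (α : AddCircle (1:ℝ)))/2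
          + (-α/2 + fract1 (x + (α : AddCircle (1:ℝ)))/2 - fract1 x/2)
          = (n:ℝ) + (α/2 + fract1 x/2) := by linarith
      rw [harg, expc_add, expc_int, one_mul]
    show expc (fract1 (x + (α : AddCircle (1:ℝ)))/2) * F (x + (α : AddCircle (1:ℝ)))
        = lam * (expc (fract1 x/2) * F x)
    rw [hF',
      show expc (fract1 (x + (α : AddCircle (1:ℝ)))/2) * (c * rho α x * F x)
        = c * (expc (fract1 (x + (α : AddCircle (1:ℝ)))/2) * rho α x) * F x from by ring,
      key, hlam]
    ring
  have hHmeas : Measurable H := by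
    apply Measurable.mul ?_ hFm
    exact Complex.measurable_exp.comp
      ((Complex.measurable_ofReal.comp (measurable_fract1.div_const 2)).const_mul _)
  have hHnorm : ∀ x, ‖H x‖ = 1 := fun x => by
    simp only [hH]; rw [norm_mul, norm_expc, hFnorm, one_mul]
  -- Fourier coefficient identity
  have hcoeff : ∀ n : ℤ, (fourier n ((α:ℝ) : AddCircle (1:ℝ)) : ℂ) * fourierCoeff H n
      = lam * fourierCoeff H n := by
    intro n
    have h2 : fourierCoeff (fun x => H (x + ((α:ℝ) : AddCircle (1:ℝ)))) n
        = lam * fourierCoeff H n := by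
      rw [← fourierCoeff.const_mul H lam n]
      simp only [fourierCoeff]
      exact integral_congr_ae (heig.mono fun x hx => by dsimp only; rw [hx])
    rw [← h2]
    symm
    -- change of variables
    have mp : MeasurePreserving (fun y : AddCircle (1:ℝ) => y + ((α:ℝ) : AddCircle (1:ℝ))) μ μ :=
      measurePreserving_add_right μ _
    have emb : MeasurableEmbedding (fun y : AddCircle (1:ℝ) => y + ((α:ℝ) : AddCircle (1:ℝ))) :=
      (MeasurableEquiv.addRight ((α:ℝ) : AddCircle (1:ℝ))).measurableEmbedding
    have hcv := mp.integral_comp emb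
      (fun y => (fourier (-n) (y - ((α:ℝ) : AddCircle (1:ℝ))) : ℂ) * H y)
    simp only [add_sub_cancel_right] at hcv
    have hsplit : ∀ y : AddCircle (1:ℝ),
        (fourier (-n) (y - ((α:ℝ) : AddCircle (1:ℝ))) : ℂ) * H y
        = (fourier n ((α:ℝ) : AddCircle (1:ℝ)) : ℂ) * ((fourier (-n) y : ℂ) * H y) := by
      intro y
      rw [sub_eq_add_neg, fourier_add_apply', fourier_neg_neg']
      ring
    calc fourierCoeff (fun x => H (x + ((α:ℝ) : AddCircle (1:ℝ)))) n
        = ∫ x, (fourier (-n) x : ℂ) * H (x + ((α:ℝ) : AddCircle (1:ℝ))) ∂μ := by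
          simp only [fourierCoeff, smul_eq_mul]; rfl
      _ = ∫ y, (fourier (-n) (y - ((α:ℝ) : AddCircle (1:ℝ))) : ℂ) * H y ∂μ := hcv
      _ = ∫ y, (fourier n ((α:ℝ) : AddCircle (1:ℝ)) : ℂ) * ((fourier (-n) y : ℂ) * H y) ∂μ := by
          simp only [hsplit]
      _ = (fourier n ((α:ℝ) : AddCircle (1:ℝ)) : ℂ) * ∫ y, (fourier (-n) y : ℂ) * H y ∂μ :=
          integral_const_mul _ _
      _ = (fourier n ((α:ℝ) : AddCircle (1:ℝ)) : ℂ) * fourierCoeff H n := by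
          simp only [fourierCoeff, smul_eq_mul]; rfl
  -- some Fourier coefficient is nonzero
  have hmem : MemLp H 2 μ :=
    MemLp.of_bound hHmeas.aestronglyMeasurable 1
      (Filter.Eventually.of_forall fun x => (hHnorm x).le)
  by_cases hz : ∀ n : ℤ, fourierCoeff H n = 0
  · have hrepr : (fourierBasis (T := 1)).repr (hmem.toLp H) = 0 := by
      ext n
      rw [fourierBasis_repr]
      have hcongr : fourierCoeff ((hmem.toLp H : Lp ℂ 2 μ) : AddCircle (1:ℝ) → ℂ) n
          = fourierCoeff H n := by
        simp only [fourierCoeff]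
        exact integral_congr_ae ((MemLp.coeFn_toLp hmem).mono fun x hx => by dsimp only; rw [hx])
      rw [hcongr, hz n]
      rfl
    have hHL0 : hmem.toLp H = 0 := by
      have := (fourierBasis (T := 1)).repr.map_eq_zero_iff.mp hrepr
      exact this
    have hH0 : ∀ᵐ x ∂μ, H x = 0 := by
      filter_upwards [MemLp.coeFn_toLp hmem, Lp.coeFn_zero ℂ 2 μ] with x h1 h2
      rw [← h1, hHL0, h2]; rfl
    haveI : (ae μ).NeBot := ae_neBot.2 (IsProbabilityMeasure.ne_zero μ)
    obtain ⟨x, hx⟩ := hH0.exists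
    have := hHnorm x
    rw [hx] at this
    simp at this
  · push_neg at hz
    obtain ⟨n, hn⟩ := hz
    have hlam_eq : lam = (fourier n ((α:ℝ) : AddCircle (1:ℝ)) : ℂ) :=
      (mul_right_cancel₀ hn (hcoeff n)).symm
    have hfour : (fourier n ((α:ℝ) : AddCircle (1:ℝ)) : ℂ) = expc (n * α) := by
      rw [fourier_coe_apply, expc]
      congr 1
      push_cast
      ring
    have e1 : lam * lam = expc α := by
      rw [hlam]
      rw [show c * expc (α/2) * (c * expc (α/2)) = (c*c) * (expc (α/2) * expc (α/2)) from by ring,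
        hc2, one_mul, ← expc_add]
      norm_num
    have e2 : lam * lam = expc (n*α + n*α) := by rw [hlam_eq, hfour, expc_add]
    have e3 : expc α = expc (n*α + n*α) := by rw [← e1, e2]
    rw [expc, expc, Complex.exp_eq_exp_iff_exists_int] at e3
    obtain ⟨k, hk⟩ := e3
    have h2pi : (2*(Real.pi:ℂ)*Complex.I) ≠ 0 := by
      simp [Real.pi_ne_zero, Complex.I_ne_zero]
    have hk2 : (2*(Real.pi:ℂ)*Complex.I) * (α:ℂ)
        = (2*(Real.pi:ℂ)*Complex.I) * (((n*α + n*α : ℝ):ℂ) + k) := by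
      rw [hk]; push_cast; ring
    have hk3 := mul_left_cancel₀ h2pi hk2
    have hk4 : α = (n*α + n*α) + k := by
      have := congrArg Complex.re hk3
      simpa using this
    have hne : ((1 - 2*n : ℤ) : ℚ) ≠ 0 := by
      exact_mod_cast (by omega : (1 - 2*n : ℤ) ≠ 0)
    apply hα
    refine ⟨(k : ℚ) / ((1 - 2*n : ℤ) : ℚ), ?_⟩
    push_cast
    rw [div_eq_iff (by exact_mod_cast hne : ((1:ℝ) - 2*n) ≠ 0)]
    push_cast at hk4
    linarith
end
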